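/- arXiv:1902.09229 — 9 statements merged into one kernel-verified Lean document; each statement's English description precedes it below -/
import Mathlib

section
/- For any convex loss function ℓ : ℝ → ℝ, representation function f : X → ℝ^d, distribution ρ over a finite set of classes C, and class-conditional distributions D_c over X, the unsupervised contrastive loss L_un(f) = E_{c⁺,c⁻∼ρ²} E_{x,x⁺∼D_{c⁺}², x⁻∼D_{c⁻}} [ℓ(f(x)ᵀ(f(x⁺) − f(x⁻)))] satisfies L_un(f) ≥ E_{c⁺,c⁻∼ρ²} E_{x∼D_{c⁺}} [ℓ(f(x)ᵀ(μ_{c⁺} − μ_{c⁻}))], where μ_c = E_{x∼D_c}[f(x)]. -/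
open MeasureTheory
open scoped RealInnerProductSpace BigOperators

private lemma integ_bdd {X : Type*} [MeasurableSpace X] {ν : Measure X} [IsFiniteMeasure ν]
    {E : Type*} [NormedAddCommGroup E] {g : X → E} (hg : AEStronglyMeasurable g ν)
    {K : ℝ} (h : ∀ x, ‖g x‖ ≤ K) : Integrable g ν :=
  ⟨hg, HasFiniteIntegral.of_bounded (ae_of_all _ h)⟩

/-- scalar Jensen for bounded measurable `g`. -/
private lemma jensen_aux {X : Type*} [MeasurableSpace X] (ν : Measure X)
    [IsProbabilityMeasure ν] (ℓ : ℝ → ℝ) (hℓ : ConvexOn ℝ Set.univ ℓ) (hℓc : Continuous ℓ)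
    {g : X → ℝ} (hg : Measurable g) {K : ℝ} (hK : ∀ x, |g x| ≤ K) :
    ℓ (∫ x, g x ∂ν) ≤ ∫ x, ℓ (g x) ∂ν := by
  obtain ⟨M, hM⟩ := (isCompact_Icc (a := -K) (b := K)).exists_bound_of_continuousOn
    hℓc.continuousOn
  refine hℓ.map_integral_le hℓc.continuousOn isClosed_univ
    (Filter.Eventually.of_forall fun _ => trivial)
    (integ_bdd hg.aestronglyMeasurable (fun x => (Real.norm_eq_abs _).le.trans (hK x)))
    (integ_bdd (hℓc.measurable.comp hg).aestronglyMeasurable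
      (K := M) fun x => hM _ ?_)
  exact abs_le.mp (hK x)

/-- Jensen's inequality for the contrastive unsupervised loss: replacing the
positive/negative samples by their class means can only decrease the loss. -/
theorem contrastive_loss_ge_mean_loss
    {X : Type*} [MeasurableSpace X] {C : Type*} [Fintype C] {d : ℕ}
    (ρ : C → ℝ) (hρ0 : ∀ c, 0 ≤ ρ c) (hρ1 : ∑ c, ρ c = 1)
    (D : C → Measure X) (hD : ∀ c, IsProbabilityMeasure (D c))
    (f : X → EuclideanSpace ℝ (Fin d)) (hfm : Measurable f)
    (R : ℝ) (hfb : ∀ x, ‖f x‖ ≤ R)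
    (ℓ : ℝ → ℝ) (hℓ : ConvexOn ℝ Set.univ ℓ) (hℓc : Continuous ℓ)
    (μ : C → EuclideanSpace ℝ (Fin d)) (hμ : ∀ c, μ c = ∫ x, f x ∂(D c)) :
    ∑ cp, ∑ cm, ρ cp * ρ cm *
        ∫ x, ∫ xp, ∫ xm, ℓ ⟪f x, f xp - f xm⟫ ∂(D cm) ∂(D cp) ∂(D cp)
    ≥ ∑ cp, ∑ cm, ρ cp * ρ cm * ∫ x, ℓ ⟪f x, μ cp - μ cm⟫ ∂(D cp) := by
  haveI := hD
  -- integrability of f w.r.t. each D c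
  have hfi : ∀ c, Integrable f (D c) :=
    fun c => integ_bdd hfm.aestronglyMeasurable hfb
  -- norm bound on the means
  have hμb : ∀ c, ‖μ c‖ ≤ R := by
    intro c
    rw [hμ c]
    calc ‖∫ x, f x ∂(D c)‖ ≤ R * ((D c) Set.univ).toReal :=
          norm_integral_le_of_norm_le_const (ae_of_all _ hfb)
      _ = R := by simp
  -- global bound on inner products appearing
  have hK : ∀ (x : X) (u v : EuclideanSpace ℝ (Fin d)), ‖u‖ ≤ R → ‖v‖ ≤ R →
      |⟪f x, u - v⟫| ≤ 2 * R ^ 2 := by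
    intro x u v hu hv
    have hR : (0 : ℝ) ≤ R := (norm_nonneg _).trans (hfb x)
    calc |⟪f x, u - v⟫| ≤ ‖f x‖ * ‖u - v‖ := abs_real_inner_le_norm _ _
      _ ≤ R * (R + R) := by
          refine mul_le_mul (hfb x) ((norm_sub_le _ _).trans (add_le_add hu hv))
            (norm_nonneg _) hR
      _ = 2 * R ^ 2 := by ring
  -- bound on ℓ over the relevant compact interval
  obtain ⟨M, hM⟩ := (isCompact_Icc (a := -(2 * R ^ 2)) (b := 2 * R ^ 2)).exists_bound_of_continuousOn
    hℓc.continuousOn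
  have hMmem : ∀ (x : X) (u v : EuclideanSpace ℝ (Fin d)), ‖u‖ ≤ R → ‖v‖ ≤ R →
      ‖ℓ ⟪f x, u - v⟫‖ ≤ M := fun x u v hu hv => hM _ (abs_le.mp (hK x u v hu hv))
  refine Finset.sum_le_sum fun cp _ => Finset.sum_le_sum fun cm _ => ?_
  refine mul_le_mul_of_nonneg_left ?_ (mul_nonneg (hρ0 cp) (hρ0 cm))
  -- the pointwise (in x) Jensen bound
  have key : ∀ x : X, ℓ ⟪f x, μ cp - μ cm⟫ ≤
      ∫ xp, ∫ xm, ℓ ⟪f x, f xp - f xm⟫ ∂(D cm) ∂(D cp) := by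
    intro x
    -- step 1: for each xp, Jensen over xm
    have step1 : ∀ xp : X, ℓ ⟪f x, f xp - μ cm⟫ ≤ ∫ xm, ℓ ⟪f x, f xp - f xm⟫ ∂(D cm) := by
      intro xp
      have hmeas : Measurable fun xm => ⟪f x, f xp - f xm⟫ :=
        measurable_const.inner (measurable_const.sub hfm)
      have hint : (∫ xm, ⟪f x, f xp - f xm⟫ ∂(D cm)) = ⟪f x, f xp - μ cm⟫ := by
        have : Integrable (fun xm => f xp - f xm) (D cm) := (integrable_const _).sub (hfi cm)
        rw [integral_inner this (f x)]
        congr 1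
        rw [integral_sub (integrable_const _) (hfi cm), integral_const]
        simp [hμ cm]
      have := jensen_aux (D cm) ℓ hℓ hℓc hmeas
        (K := 2 * R ^ 2) (fun xm => hK x (f xp) (f xm) (hfb xp) (hfb xm))
      rwa [hint] at this
    -- step 2: Jensen over xp
    have step2 : ℓ ⟪f x, μ cp - μ cm⟫ ≤ ∫ xp, ℓ ⟪f x, f xp - μ cm⟫ ∂(D cp) := by
      have hmeas : Measurable fun xp => ⟪f x, f xp - μ cm⟫ :=
        measurable_const.inner (hfm.sub measurable_const)
      have hint : (∫ xp, ⟪f x, f xp - μ cm⟫ ∂(D cp)) = ⟪f x, μ cp - μ cm⟫ := by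
        have : Integrable (fun xp => f xp - μ cm) (D cp) := (hfi cp).sub (integrable_const _)
        rw [integral_inner this (f x)]
        congr 1
        rw [integral_sub (hfi cp) (integrable_const _), integral_const]
        simp [hμ cp]
      have := jensen_aux (D cp) ℓ hℓ hℓc hmeas
        (K := 2 * R ^ 2) (fun xp => hK x (f xp) (μ cm) (hfb xp) (hμb cm))
      rwa [hint] at this
    -- combine: integrate step1 over xp
    have hsm2 : StronglyMeasurable fun p : X × X => ℓ ⟪f x, f p.1 - f p.2⟫ :=
      (hℓc.measurable.comp (measurable_const.inner
        ((hfm.comp measurable_fst).sub (hfm.comp measurable_snd)))).stronglyMeasurable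
    have hintA : Integrable (fun xp => ∫ xm, ℓ ⟪f x, f xp - f xm⟫ ∂(D cm)) (D cp) := by
      refine integ_bdd hsm2.integral_prod_right'.aestronglyMeasurable (K := M) fun xp => ?_
      calc ‖∫ xm, ℓ ⟪f x, f xp - f xm⟫ ∂(D cm)‖ ≤ M * ((D cm) Set.univ).toReal :=
          norm_integral_le_of_norm_le_const
            (ae_of_all _ fun xm => hMmem x (f xp) (f xm) (hfb xp) (hfb xm))
        _ = M := by simp
    have hintB : Integrable (fun xp => ℓ ⟪f x, f xp - μ cm⟫) (D cp) :=
      integ_bdd ((hℓc.measurable.comp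
          (measurable_const.inner (hfm.sub measurable_const))).aestronglyMeasurable)
        (K := M) fun xp => hMmem x (f xp) (μ cm) (hfb xp) (hμb cm)
    exact step2.trans (integral_mono hintB hintA step1)
  -- integrate over x
  have hsm3 : StronglyMeasurable fun p : X × X =>
      ∫ xm, ℓ ⟪f p.1, f p.2 - f xm⟫ ∂(D cm) := by
    have : StronglyMeasurable fun q : (X × X) × X => ℓ ⟪f q.1.1, f q.1.2 - f q.2⟫ :=
      (hℓc.measurable.comp ((hfm.comp (measurable_fst.comp measurable_fst)).inner
        ((hfm.comp (measurable_snd.comp measurable_fst)).sub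
          (hfm.comp measurable_snd)))).stronglyMeasurable
    exact this.integral_prod_right'
  have hintA : Integrable
      (fun x => ∫ xp, ∫ xm, ℓ ⟪f x, f xp - f xm⟫ ∂(D cm) ∂(D cp)) (D cp) := by
    refine integ_bdd hsm3.integral_prod_right'.aestronglyMeasurable (K := M) fun x => ?_
    calc ‖∫ xp, ∫ xm, ℓ ⟪f x, f xp - f xm⟫ ∂(D cm) ∂(D cp)‖
        ≤ M * ((D cp) Set.univ).toReal := by
          refine norm_integral_le_of_norm_le_const (ae_of_all _ fun xp => ?_)
          calc ‖∫ xm, ℓ ⟪f x, f xp - f xm⟫ ∂(D cm)‖ ≤ M * ((D cm) Set.univ).toReal :=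
              norm_integral_le_of_norm_le_const
                (ae_of_all _ fun xm => hMmem x (f xp) (f xm) (hfb xp) (hfb xm))
            _ = M := by simp
      _ = M := by simp
  have hintB : Integrable (fun x => ℓ ⟪f x, μ cp - μ cm⟫) (D cp) :=
    integ_bdd ((hℓc.measurable.comp (hfm.inner measurable_const)).aestronglyMeasurable)
      (K := M) fun x => hMmem x (μ cp) (μ cm) (hμb cp) (hμb cm)
  exact integral_mono hintB hintA key
end

section
/- Let τ = P_{c,c'∼ρ²}[c = c'] be the probability that two i.i.d. classes from ρ coincide, and assume τ < 1. If ℓ is convex with ℓ(0) = 1 and the mean-classifier average binary supervised loss is L_sup^μ(f) = E_{c⁺,c⁻∼ρ²}[ (1/2) E_{x∼D_{c⁺}} ℓ(f(x)ᵀ(μ_{c⁺} − μ_{c⁻})) + (1/2) E_{x∼D_{c⁻}} ℓ(f(x)ᵀ(μ_{c⁻} − μ_{c⁺})) | c⁺ ≠ c⁻ ], then L_sup^μ(f) ≤ (L_un(f) − τ)/(1 − τ). -/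
open MeasureTheory
open scoped RealInnerProductSpace BigOperators

/-!
For fixed `x`, the map `v ↦ ℓ ⟪f x, v⟫` is convex, so Jensen's inequality, applied first over
`x⁻ ∼ D_{c⁻}` and then over `x⁺ ∼ D_{c⁺}`, bounds `ℓ ⟪f x, μ_{c⁺} - μ_{c⁻}⟫` by the average of
`ℓ ⟪f x, f x⁺ - f x⁻⟫`. Summing over class pairs with weights `ρ c⁺ ρ c⁻`, the off-diagonal pairs
give `(1 - τ)` times the mean-classifier loss once symmetrised in `c⁺ ↔ c⁻`, while a diagonal
pair `c⁺ = c⁻ = c` contributes at least `ρ c ^ 2 ℓ 0 = ρ c ^ 2`. Hence `L_un ≥ τ + (1 - τ) L_sup^μ`.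
-/

section Collision

variable {C : Type*} [Fintype C]

theorem sum_sum_ite_ne_eq_sub [DecidableEq C] {M : Type*} [AddCommGroup M] (g : C → C → M) :
    ∑ i, ∑ j, (if i ≠ j then g i j else 0) = ∑ i, ∑ j, g i j - ∑ i, g i i := by
  have h : ∀ i j, (if i ≠ j then g i j else 0) = g i j - if i = j then g i j else 0 := by
    intro i j; split_ifs <;> simp_all
  simp only [h, Finset.sum_sub_distrib, Finset.sum_ite_eq, Finset.mem_univ, if_true]

theorem sum_sum_mul_mul_swap {R : Type*} [CommSemiring R] (ρ : C → R) (A : C → C → R) :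
    ∑ i, ∑ j, ρ i * ρ j * A j i = ∑ i, ∑ j, ρ i * ρ j * A i j := by
  rw [Finset.sum_comm]
  simp only [mul_comm (ρ _) (ρ _)]

theorem sum_sum_ite_ne_mul_half_add_swap_le [DecidableEq C] {ρ : C → ℝ} (hρ : ∀ c, 0 ≤ ρ c)
    {A I : C → C → ℝ} (hAI : ∀ c c', A c c' ≤ I c c') (hA : ∀ c, A c c = 1) :
    ∑ c, ∑ c', (if c ≠ c' then ρ c * ρ c' * ((1 / 2) * A c c' + (1 / 2) * A c' c) else 0)
      ≤ ∑ c, ∑ c', ρ c * ρ c' * I c c' - ∑ c, ρ c ^ 2 := by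
  have hsymm : ∑ c, ∑ c', ρ c * ρ c' * ((1 / 2) * A c c' + (1 / 2) * A c' c)
      = ∑ c, ∑ c', ρ c * ρ c' * A c c' := by
    have := sum_sum_mul_mul_swap ρ A
    simp only [mul_add, Finset.sum_add_distrib, ← mul_assoc, mul_right_comm _ (1 / 2 : ℝ),
      ← Finset.sum_mul, this]
    ring
  rw [sum_sum_ite_ne_eq_sub, hsymm]
  gcongr with c _ c' _
  · exact mul_nonneg (hρ c) (hρ c')
  · exact hAI c c'
  · norm_num [hA, sq]

end Collision

section Jensen

variable {X E : Type*} [MeasurableSpace X] [NormedAddCommGroup E] [InnerProductSpace ℝ E]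
  {ℓ : ℝ → ℝ}

theorem norm_integral_le_of_forall_norm_le {F : Type*} [NormedAddCommGroup F] [NormedSpace ℝ F]
    {ν : Measure X} [IsProbabilityMeasure ν] {g : X → F} {M : ℝ} (hg : ∀ y, ‖g y‖ ≤ M) :
    ‖∫ y, g y ∂ν‖ ≤ M := by
  simpa using norm_integral_le_of_norm_le_const (μ := ν) (ae_of_all _ hg)

theorem Continuous.exists_bound_comp_inner_sub (hℓc : Continuous ℓ) (R : ℝ) :
    ∃ M, ∀ a b c : E, ‖a‖ ≤ R → ‖b‖ ≤ R → ‖c‖ ≤ R → ‖ℓ ⟪a, b - c⟫‖ ≤ M := by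
  obtain ⟨M, hM⟩ := (isCompact_Icc (a := -(R * (R + R))) (b := R * (R + R))
    ).exists_bound_of_continuousOn hℓc.continuousOn
  refine ⟨M, fun a b c ha hb hc => hM _ (Set.mem_Icc.mpr (abs_le.mp ?_))⟩
  calc |⟪a, b - c⟫| ≤ ‖a‖ * ‖b - c‖ := abs_real_inner_le_norm _ _
    _ ≤ R * (R + R) := by
      gcongr
      · exact (norm_nonneg a).trans ha
      · exact (norm_sub_le b c).trans (add_le_add hb hc)

variable [CompleteSpace E]

theorem ConvexOn.comp_inner_integral_le (hℓ : ConvexOn ℝ Set.univ ℓ) (hℓc : Continuous ℓ) (w : E)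
    {ν : Measure X} [IsProbabilityMeasure ν] {g : X → E} (hg : Integrable g ν)
    (hℓg : Integrable (fun y => ℓ ⟪w, g y⟫) ν) :
    ℓ ⟪w, ∫ y, g y ∂ν⟫ ≤ ∫ y, ℓ ⟪w, g y⟫ ∂ν := by
  rw [← integral_inner hg]
  exact hℓ.map_integral_le hℓc.continuousOn isClosed_univ (ae_of_all _ fun _ => trivial)
    (hg.const_inner w) hℓg

theorem ConvexOn.comp_inner_integral_sub_integral_le (hℓ : ConvexOn ℝ Set.univ ℓ)
    (hℓc : Continuous ℓ) {f : X → E} (hf : StronglyMeasurable f) {R : ℝ} (hfR : ∀ x, ‖f x‖ ≤ R)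
    (ν₁ ν₂ : Measure X) [IsProbabilityMeasure ν₁] [IsProbabilityMeasure ν₂] {w : E}
    (hw : ‖w‖ ≤ R) :
    ℓ ⟪w, (∫ y, f y ∂ν₁) - ∫ y, f y ∂ν₂⟫ ≤ ∫ xp, ∫ xm, ℓ ⟪w, f xp - f xm⟫ ∂ν₂ ∂ν₁ := by
  obtain ⟨M, hM⟩ := hℓc.exists_bound_comp_inner_sub (E := E) R
  have hfi : ∀ (ν : Measure X) [IsProbabilityMeasure ν], Integrable f ν := fun ν _ =>
    .of_bound hf.aestronglyMeasurable R (ae_of_all _ hfR)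
  set μ₂ := ∫ y, f y ∂ν₂
  have hμ₂ : ‖μ₂‖ ≤ R := norm_integral_le_of_forall_norm_le hfR
  have hG : StronglyMeasurable fun p : X × X => ℓ ⟪w, f p.1 - f p.2⟫ :=
    hℓc.comp_stronglyMeasurable (stronglyMeasurable_const.inner
      ((hf.comp_measurable measurable_fst).sub (hf.comp_measurable measurable_snd)))
  have hG₁ : Integrable (fun xp => ℓ ⟪w, f xp - μ₂⟫) ν₁ :=
    .of_bound (hℓc.comp_stronglyMeasurable (stronglyMeasurable_const.inner
        (hf.sub stronglyMeasurable_const))).aestronglyMeasurable M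
      (ae_of_all _ fun xp => hM w (f xp) μ₂ hw (hfR xp) hμ₂)
  have hG₂ : Integrable (fun xp => ∫ xm, ℓ ⟪w, f xp - f xm⟫ ∂ν₂) ν₁ :=
    .of_bound hG.integral_prod_right'.aestronglyMeasurable M (ae_of_all _ fun xp =>
      norm_integral_le_of_forall_norm_le fun xm => hM w (f xp) (f xm) hw (hfR xp) (hfR xm))
  have hinner : ∀ xp, ℓ ⟪w, f xp - μ₂⟫ ≤ ∫ xm, ℓ ⟪w, f xp - f xm⟫ ∂ν₂ := fun xp => by
    have := hℓ.comp_inner_integral_le hℓc w (g := fun xm => f xp - f xm)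
      ((integrable_const (f xp)).sub (hfi ν₂))
      (.of_bound (hG.comp_measurable measurable_prodMk_left).aestronglyMeasurable M
        (ae_of_all _ fun xm => hM w (f xp) (f xm) hw (hfR xp) (hfR xm)))
    rwa [integral_sub (integrable_const _) (hfi ν₂), integral_const, probReal_univ, one_smul]
      at this
  have houter : ℓ ⟪w, (∫ y, f y ∂ν₁) - μ₂⟫ ≤ ∫ xp, ℓ ⟪w, f xp - μ₂⟫ ∂ν₁ := by
    have := hℓ.comp_inner_integral_le hℓc w (g := fun xp => f xp - μ₂)
      ((hfi ν₁).sub (integrable_const _)) hG₁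
    rwa [integral_sub (hfi ν₁) (integrable_const _), integral_const, probReal_univ, one_smul]
      at this
  exact houter.trans (integral_mono hG₁ hG₂ hinner)

theorem ConvexOn.integral_comp_inner_integral_sub_integral_le (hℓ : ConvexOn ℝ Set.univ ℓ)
    (hℓc : Continuous ℓ) {f : X → E} (hf : StronglyMeasurable f) {R : ℝ} (hfR : ∀ x, ‖f x‖ ≤ R)
    (ν₀ ν₁ ν₂ : Measure X) [IsProbabilityMeasure ν₀] [IsProbabilityMeasure ν₁]
    [IsProbabilityMeasure ν₂] :
    ∫ x, ℓ ⟪f x, (∫ y, f y ∂ν₁) - ∫ y, f y ∂ν₂⟫ ∂ν₀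
      ≤ ∫ x, ∫ xp, ∫ xm, ℓ ⟪f x, f xp - f xm⟫ ∂ν₂ ∂ν₁ ∂ν₀ := by
  obtain ⟨M, hM⟩ := hℓc.exists_bound_comp_inner_sub (E := E) R
  have hμ : ∀ (ν : Measure X) [IsProbabilityMeasure ν], ‖∫ y, f y ∂ν‖ ≤ R := fun _ _ =>
    norm_integral_le_of_forall_norm_le hfR
  have hF : StronglyMeasurable fun p : (X × X) × X => ℓ ⟪f p.1.1, f p.1.2 - f p.2⟫ :=
    hℓc.comp_stronglyMeasurable ((hf.comp_measurable (measurable_fst.comp measurable_fst)).inner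
      ((hf.comp_measurable (measurable_snd.comp measurable_fst)).sub
        (hf.comp_measurable measurable_snd)))
  have hlhs : Integrable (fun x => ℓ ⟪f x, (∫ y, f y ∂ν₁) - ∫ y, f y ∂ν₂⟫) ν₀ :=
    .of_bound (hℓc.comp_stronglyMeasurable (hf.inner stronglyMeasurable_const)).aestronglyMeasurable
      M (ae_of_all _ fun x => hM _ _ _ (hfR x) (hμ ν₁) (hμ ν₂))
  have hrhs : Integrable (fun x => ∫ xp, ∫ xm, ℓ ⟪f x, f xp - f xm⟫ ∂ν₂ ∂ν₁) ν₀ :=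
    .of_bound hF.integral_prod_right'.integral_prod_right'.aestronglyMeasurable M
      (ae_of_all _ fun x => norm_integral_le_of_forall_norm_le fun xp =>
        norm_integral_le_of_forall_norm_le fun xm => hM _ _ _ (hfR x) (hfR xp) (hfR xm))
  exact integral_mono hlhs hrhs fun x =>
    hℓ.comp_inner_integral_sub_integral_le hℓc hf hfR ν₁ ν₂ (hfR x)

end Jensen

theorem mean_classifier_loss_le_unsup_loss_general
    {X : Type*} [MeasurableSpace X] {C : Type*} [Fintype C] [DecidableEq C] {d : ℕ}
    (ρ : C → ℝ) (hρ0 : ∀ c, 0 ≤ ρ c)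
    (hτ : ∑ c, (ρ c) ^ 2 < 1)
    (D : C → Measure X) (hD : ∀ c, IsProbabilityMeasure (D c))
    (f : X → EuclideanSpace ℝ (Fin d)) (hfm : Measurable f)
    (R : ℝ) (hfb : ∀ x, ‖f x‖ ≤ R)
    (ℓ : ℝ → ℝ) (hℓ : ConvexOn ℝ Set.univ ℓ) (hℓc : Continuous ℓ) (hℓ0 : ℓ 0 = 1)
    (μ : C → EuclideanSpace ℝ (Fin d)) (hμ : ∀ c, μ c = ∫ x, f x ∂(D c)) :
    (1 / (1 - ∑ c, (ρ c) ^ 2)) *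
        ∑ cp, ∑ cm, (if cp ≠ cm then ρ cp * ρ cm *
          ((1 / 2) * ∫ x, ℓ ⟪f x, μ cp - μ cm⟫ ∂(D cp) +
           (1 / 2) * ∫ x, ℓ ⟪f x, μ cm - μ cp⟫ ∂(D cm)) else 0)
    ≤ ((∑ cp, ∑ cm, ρ cp * ρ cm *
          ∫ x, ∫ xp, ∫ xm, ℓ ⟪f x, f xp - f xm⟫ ∂(D cm) ∂(D cp) ∂(D cp)) -
        ∑ c, (ρ c) ^ 2) / (1 - ∑ c, (ρ c) ^ 2) := by
  have := hD
  rw [one_div_mul_eq_div]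
  refine div_le_div_of_nonneg_right (sum_sum_ite_ne_mul_half_add_swap_le hρ0
    (A := fun c c' => ∫ x, ℓ ⟪f x, μ c - μ c'⟫ ∂(D c)) (fun c c' => ?_) fun c => ?_)
    (sub_pos.mpr hτ).le
  · rw [hμ c, hμ c']
    exact hℓ.integral_comp_inner_integral_sub_integral_le hℓc hfm.stronglyMeasurable hfb
      (D c) (D c) (D c')
  · simp [hℓ0]

/-- Lemma 4.3: the mean-classifier average binary supervised loss is upper bounded by
`(L_un(f) - τ)/(1 - τ)` where `τ` is the class collision probability. -/
theorem mean_classifier_loss_le_unsup_loss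
    {X : Type*} [MeasurableSpace X] {C : Type*} [Fintype C] [DecidableEq C] {d : ℕ}
    (ρ : C → ℝ) (hρ0 : ∀ c, 0 ≤ ρ c) (hρ1 : ∑ c, ρ c = 1)
    (hτ : ∑ c, (ρ c) ^ 2 < 1)
    (D : C → Measure X) (hD : ∀ c, IsProbabilityMeasure (D c))
    (f : X → EuclideanSpace ℝ (Fin d)) (hfm : Measurable f)
    (R : ℝ) (hfb : ∀ x, ‖f x‖ ≤ R)
    (ℓ : ℝ → ℝ) (hℓ : ConvexOn ℝ Set.univ ℓ) (hℓc : Continuous ℓ) (hℓ0 : ℓ 0 = 1)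
    (μ : C → EuclideanSpace ℝ (Fin d)) (hμ : ∀ c, μ c = ∫ x, f x ∂(D c)) :
    (1 / (1 - ∑ c, (ρ c) ^ 2)) *
        ∑ cp, ∑ cm, (if cp ≠ cm then ρ cp * ρ cm *
          ((1 / 2) * ∫ x, ℓ ⟪f x, μ cp - μ cm⟫ ∂(D cp) +
           (1 / 2) * ∫ x, ℓ ⟪f x, μ cm - μ cp⟫ ∂(D cm)) else 0)
    ≤ ((∑ cp, ∑ cm, ρ cp * ρ cm *
          ∫ x, ∫ xp, ∫ xm, ℓ ⟪f x, f xp - f xm⟫ ∂(D cm) ∂(D cp) ∂(D cp)) -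
        ∑ c, (ρ c) ^ 2) / (1 - ∑ c, (ρ c) ^ 2) :=
  mean_classifier_loss_le_unsup_loss_general ρ hρ0 hτ D hD f hfm R hfb ℓ hℓ hℓc hℓ0 μ hμ
end

section
/- If ℓ is convex with ℓ(0) = 1, then the same-class unsupervised loss satisfies L_un^=(f) = E_{c∼ν} E_{x,x⁺,x⁻∼D_c³}[ℓ(f(x)ᵀ(f(x⁺) − f(x⁻)))] ≥ 1, where ν is the distribution over C with ν(c) ∝ ρ(c)². Consequently L_un(f) ≥ τ for every f. -/
open MeasureTheory
open scoped RealInnerProductSpace BigOperators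

lemma key_triple_ge_one {X : Type*} [MeasurableSpace X] (μ : Measure X)
    [IsProbabilityMeasure μ] {d : ℕ}
    (f : X → EuclideanSpace ℝ (Fin d)) (hfm : Measurable f)
    (R : ℝ) (hfb : ∀ x, ‖f x‖ ≤ R)
    (ℓ : ℝ → ℝ) (hℓ : ConvexOn ℝ Set.univ ℓ) (hℓc : Continuous ℓ) (hℓ0 : ℓ 0 = 1) :
    1 ≤ ∫ x, ∫ xp, ∫ xm, ℓ ⟪f x, f xp - f xm⟫ ∂μ ∂μ ∂μ := by
  set R' := max R 0 with hR'
  have hfb' : ∀ x, ‖f x‖ ≤ R' := fun x => (hfb x).trans (le_max_left _ _)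
  have hR0 : (0:ℝ) ≤ R' := le_max_right _ _
  have hφb : ∀ x y z : X, |(⟪f x, f y - f z⟫ : ℝ)| ≤ 2 * R' ^ 2 := by
    intro x y z
    calc |(⟪f x, f y - f z⟫ : ℝ)| ≤ ‖f x‖ * ‖f y - f z‖ := by
          simpa using norm_inner_le_norm (𝕜 := ℝ) (f x) (f y - f z)
      _ ≤ R' * (R' + R') := by
          refine mul_le_mul (hfb' x) ((norm_sub_le _ _).trans (add_le_add (hfb' y) (hfb' z)))
            (norm_nonneg _) hR0
      _ = 2 * R' ^ 2 := by ring
  obtain ⟨M, hM⟩ := (isCompact_Icc (a := -(2*R'^2)) (b := 2*R'^2)).exists_bound_of_continuousOn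
    hℓc.continuousOn
  set G : X × (X × X) → ℝ := fun q => ℓ ⟪f q.1, f q.2.1 - f q.2.2⟫ with hG
  have hGm : Measurable G := by
    apply hℓc.measurable.comp
    exact (hfm.comp measurable_fst).inner
      ((hfm.comp (measurable_fst.comp measurable_snd)).sub
        (hfm.comp (measurable_snd.comp measurable_snd)))
  have hGi : ∀ x : X, Integrable (fun p : X × X => G (x, p)) (μ.prod μ) := by
    intro x
    refine ⟨(hGm.comp (measurable_const.prodMk measurable_id)).aestronglyMeasurable, ?_⟩
    apply HasFiniteIntegral.of_bounded (C := M)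
    filter_upwards with p
    exact hM _ (Set.mem_Icc.2 (abs_le.1 (hφb x p.1 p.2)))
  have main : ∀ x : X, 1 ≤ ∫ xp, ∫ xm, ℓ ⟪f x, f xp - f xm⟫ ∂μ ∂μ := by
    intro x
    set φ : X × X → ℝ := fun p => ⟪f x, f p.1 - f p.2⟫ with hφ
    have hφm : Measurable φ :=
      measurable_const.inner ((hfm.comp measurable_fst).sub (hfm.comp measurable_snd))
    have hφi : Integrable φ (μ.prod μ) := by
      refine ⟨hφm.aestronglyMeasurable, ?_⟩
      apply HasFiniteIntegral.of_bounded (C := 2*R'^2)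
      filter_upwards with p
      simpa using hφb x p.1 p.2
    have h1 : Integrable (fun p : X × X => (⟪f x, f p.1⟫ : ℝ)) (μ.prod μ) := by
      refine ⟨(measurable_const.inner (hfm.comp measurable_fst)).aestronglyMeasurable, ?_⟩
      apply HasFiniteIntegral.of_bounded (C := R' * R')
      filter_upwards with p
      calc ‖(⟪f x, f p.1⟫ : ℝ)‖ ≤ ‖f x‖ * ‖f p.1‖ := norm_inner_le_norm _ _
        _ ≤ R' * R' := mul_le_mul (hfb' x) (hfb' p.1) (norm_nonneg _) hR0
    have h2 : Integrable (fun p : X × X => (⟪f x, f p.2⟫ : ℝ)) (μ.prod μ) := by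
      refine ⟨(measurable_const.inner (hfm.comp measurable_snd)).aestronglyMeasurable, ?_⟩
      apply HasFiniteIntegral.of_bounded (C := R' * R')
      filter_upwards with p
      calc ‖(⟪f x, f p.2⟫ : ℝ)‖ ≤ ‖f x‖ * ‖f p.2‖ := norm_inner_le_norm _ _
        _ ≤ R' * R' := mul_le_mul (hfb' x) (hfb' p.2) (norm_nonneg _) hR0
    have hint : ∫ p, φ p ∂(μ.prod μ) = 0 := by
      have hφeq : φ = fun p : X × X => (⟪f x, f p.1⟫ : ℝ) - ⟪f x, f p.2⟫ :=
        funext fun p => inner_sub_right _ _ _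
      rw [hφeq, integral_sub h1 h2, integral_prod _ h1, integral_prod _ h2]
      simp
    have hℓφi : Integrable (fun p : X × X => ℓ (φ p)) (μ.prod μ) := hGi x
    have hJ := hℓ.map_integral_le hℓc.continuousOn isClosed_univ
      (Filter.Eventually.of_forall fun p => Set.mem_univ (φ p)) hφi hℓφi
    rw [hint, hℓ0] at hJ
    calc (1:ℝ) ≤ ∫ p, ℓ (φ p) ∂(μ.prod μ) := hJ
      _ = ∫ xp, ∫ xm, ℓ ⟪f x, f xp - f xm⟫ ∂μ ∂μ := integral_prod _ hℓφi
  have hFeq : (fun x => ∫ xp, ∫ xm, ℓ ⟪f x, f xp - f xm⟫ ∂μ ∂μ) =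
      fun x => ∫ p, G (x, p) ∂(μ.prod μ) :=
    funext fun x => (integral_prod _ (hGi x)).symm
  have hFint : Integrable (fun x => ∫ xp, ∫ xm, ℓ ⟪f x, f xp - f xm⟫ ∂μ ∂μ) μ := by
    rw [hFeq]
    refine ⟨(hGm.stronglyMeasurable.integral_prod_right').aestronglyMeasurable, ?_⟩
    apply HasFiniteIntegral.of_bounded (C := M)
    filter_upwards with x
    calc ‖∫ p, G (x, p) ∂(μ.prod μ)‖
        ≤ M * ((μ.prod μ) Set.univ).toReal := by
          apply norm_integral_le_of_norm_le_const
          filter_upwards with p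
          exact hM _ (Set.mem_Icc.2 (abs_le.1 (hφb x p.1 p.2)))
      _ = M := by simp
  calc (1:ℝ) = ∫ _x, (1:ℝ) ∂μ := by simp
    _ ≤ ∫ x, ∫ xp, ∫ xm, ℓ ⟪f x, f xp - f xm⟫ ∂μ ∂μ ∂μ :=
        integral_mono (integrable_const 1) hFint main

/-- The same-class unsupervised loss `L_un^=(f) = E_{c∼ν} E_{x,x⁺,x⁻∼D_c³}[ℓ(...)] ≥ 1`
where `ν(c) ∝ ρ(c)²`, and consequently `L_un(f) ≥ τ`. -/
theorem same_class_loss_ge_one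
    {X : Type*} [MeasurableSpace X] {C : Type*} [Fintype C] {d : ℕ}
    (ρ : C → ℝ) (hρ0 : ∀ c, 0 ≤ ρ c) (hρ1 : ∑ c, ρ c = 1)
    (hτpos : 0 < ∑ c, (ρ c) ^ 2)
    (D : C → Measure X) (hD : ∀ c, IsProbabilityMeasure (D c))
    (f : X → EuclideanSpace ℝ (Fin d)) (hfm : Measurable f)
    (R : ℝ) (hfb : ∀ x, ‖f x‖ ≤ R)
    (ℓ : ℝ → ℝ) (hℓ : ConvexOn ℝ Set.univ ℓ) (hℓc : Continuous ℓ)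
    (hℓ0 : ℓ 0 = 1) (hℓnn : ∀ v, 0 ≤ ℓ v) :
    (1 ≤ (1 / ∑ c, (ρ c) ^ 2) * ∑ c, (ρ c) ^ 2 *
        ∫ x, ∫ xp, ∫ xm, ℓ ⟪f x, f xp - f xm⟫ ∂(D c) ∂(D c) ∂(D c)) ∧
    ((∑ c, (ρ c) ^ 2) ≤ ∑ cp, ∑ cm, ρ cp * ρ cm *
        ∫ x, ∫ xp, ∫ xm, ℓ ⟪f x, f xp - f xm⟫ ∂(D cm) ∂(D cp) ∂(D cp)) := by
  have hkey : ∀ c : C, 1 ≤ ∫ x, ∫ xp, ∫ xm, ℓ ⟪f x, f xp - f xm⟫ ∂(D c) ∂(D c) ∂(D c) := by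
    intro c
    haveI := hD c
    exact key_triple_ge_one (D c) f hfm R hfb ℓ hℓ hℓc hℓ0
  have hTnn : ∀ cp cm : C,
      0 ≤ ∫ x, ∫ xp, ∫ xm, ℓ ⟪f x, f xp - f xm⟫ ∂(D cm) ∂(D cp) ∂(D cp) := by
    intro cp cm
    apply integral_nonneg; intro x
    apply integral_nonneg; intro xp
    apply integral_nonneg; intro xm
    exact hℓnn _
  constructor
  · have hs : (∑ c, (ρ c) ^ 2) ≤ ∑ c, (ρ c) ^ 2 *
        ∫ x, ∫ xp, ∫ xm, ℓ ⟪f x, f xp - f xm⟫ ∂(D c) ∂(D c) ∂(D c) := by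
      calc (∑ c, (ρ c) ^ 2) = ∑ c, (ρ c) ^ 2 * 1 := by simp
        _ ≤ _ := Finset.sum_le_sum fun c _ =>
            mul_le_mul_of_nonneg_left (hkey c) (sq_nonneg _)
    calc (1:ℝ) = (1 / ∑ c, (ρ c) ^ 2) * (∑ c, (ρ c) ^ 2) :=
          (one_div_mul_cancel hτpos.ne').symm
      _ ≤ _ := mul_le_mul_of_nonneg_left hs (one_div_nonneg.2 hτpos.le)
  · have hdiag : ∀ cp : C, ρ cp ^ 2 ≤ ∑ cm, ρ cp * ρ cm *
        ∫ x, ∫ xp, ∫ xm, ℓ ⟪f x, f xp - f xm⟫ ∂(D cm) ∂(D cp) ∂(D cp) := by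
      intro cp
      have h1 : ρ cp ^ 2 ≤ ρ cp * ρ cp *
          ∫ x, ∫ xp, ∫ xm, ℓ ⟪f x, f xp - f xm⟫ ∂(D cp) ∂(D cp) ∂(D cp) := by
        nlinarith [hkey cp, hρ0 cp, sq_nonneg (ρ cp)]
      refine h1.trans (Finset.single_le_sum (f := fun cm => ρ cp * ρ cm *
        ∫ x, ∫ xp, ∫ xm, ℓ ⟪f x, f xp - f xm⟫ ∂(D cm) ∂(D cp) ∂(D cp)) ?_ (Finset.mem_univ cp))
      intro cm _
      exact mul_nonneg (mul_nonneg (hρ0 cp) (hρ0 cm)) (hTnn cp cm)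
    exact Finset.sum_le_sum fun cp _ => hdiag cp
end

section
/- Let c be a fixed class and x, x⁺, x⁻ i.i.d. draws from D_c. For the hinge loss ℓ(v) = max(0, 1−v), the quantity E[ℓ(f(x)ᵀ(f(x⁺) − f(x⁻)))] − 1 is at most √2 · √(‖Σ(f,c)‖₂) · E_{x∼D_c}[‖f(x)‖], where Σ(f,c) is the covariance matrix of f(x) for x ∼ D_c and ‖·‖₂ is the spectral norm. -/
/-!
Fix `x` and put `g = ⟪f x, f ·⟫`. The hinge loss is at most `1 + |t|`, so the inner double
integral is at most `1 + E|g(x⁺) - g(x⁻)|`, which by Cauchy–Schwarz is at most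
`1 + √(E (g(x⁺) - g(x⁻))²) = 1 + √(2 Var g)` since `x⁺, x⁻` are independent. Finally
`Var g = ⟪f x, Σ f x⟫ ≤ ‖Σ‖ ‖f x‖²`, and integrating over `x` gives the bound.
-/

open MeasureTheory
open scoped RealInnerProductSpace BigOperators

open ProbabilityTheory Matrix

section Moments

variable {Ω : Type*} {mΩ : MeasurableSpace Ω} {μ : Measure Ω} [IsProbabilityMeasure μ]
  {X : Ω → ℝ}

lemma integral_abs_le_sqrt_integral_sq (hX : MemLp X 2 μ) :
    ∫ ω, |X ω| ∂μ ≤ √(∫ ω, X ω ^ 2 ∂μ) := by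
  have hvar := variance_nonneg |X| μ
  rw [variance_eq_sub hX.abs] at hvar
  simp only [Pi.pow_apply, Pi.abs_apply, sq_abs] at hvar
  exact Real.le_sqrt_of_sq_le (by linarith)

lemma integral_sub_sq_prod (hX : MemLp X 2 μ) :
    ∫ p, (X p.1 - X p.2) ^ 2 ∂(μ.prod μ) = 2 * Var[X; μ] := by
  have hmean : ∫ p, (X p.1 - X p.2) ∂(μ.prod μ) = 0 := by
    rw [integral_sub ((hX.integrable one_le_two).comp_fst μ)
      ((hX.integrable one_le_two).comp_snd μ), integral_fun_fst, integral_fun_snd]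
    simp
  have hvar := variance_add_prod hX hX.neg (ν := μ)
  simp only [Pi.neg_apply, ← sub_eq_add_neg, variance_neg] at hvar
  have hdiff : MemLp (fun p : Ω × Ω ↦ X p.1 - X p.2) 2 (μ.prod μ) :=
    (hX.comp_fst μ).sub (hX.comp_snd μ)
  rw [← variance_of_integral_eq_zero hdiff.aemeasurable hmean, hvar, two_mul]

lemma integral_abs_sub_prod_le (hX : MemLp X 2 μ) :
    ∫ p, |X p.1 - X p.2| ∂(μ.prod μ) ≤ √(2 * Var[X; μ]) :=
  integral_sub_sq_prod hX ▸
    integral_abs_le_sqrt_integral_sq ((hX.comp_fst μ).sub (hX.comp_snd μ))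

lemma hinge_le_one_add_abs (t : ℝ) : max (1 - t) 0 ≤ 1 + |t| :=
  max_le (by linarith [neg_abs_le t]) (by positivity)

lemma integral_integral_hinge_sub_le (hX : MemLp X 2 μ) :
    ∫ ω₁, ∫ ω₂, max (1 - (X ω₁ - X ω₂)) 0 ∂μ ∂μ ≤ 1 + √(2 * Var[X; μ]) := by
  have hdiff : MemLp (fun p : Ω × Ω ↦ X p.1 - X p.2) 2 (μ.prod μ) :=
    (hX.comp_fst μ).sub (hX.comp_snd μ)
  have hbound : Integrable (fun p : Ω × Ω ↦ 1 + |X p.1 - X p.2|) (μ.prod μ) :=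
    (integrable_const 1).add (hdiff.integrable one_le_two).abs
  have hhinge : Integrable (fun p : Ω × Ω ↦ max (1 - (X p.1 - X p.2)) 0) (μ.prod μ) :=
    hbound.mono' (by have := hdiff.aestronglyMeasurable; fun_prop) (.of_forall fun p ↦ by
      rw [Real.norm_of_nonneg (le_max_right _ _)]; exact hinge_le_one_add_abs _)
  calc ∫ ω₁, ∫ ω₂, max (1 - (X ω₁ - X ω₂)) 0 ∂μ ∂μ
      = ∫ p, max (1 - (X p.1 - X p.2)) 0 ∂(μ.prod μ) := (integral_prod _ hhinge).symm
    _ ≤ ∫ p, (1 + |X p.1 - X p.2|) ∂(μ.prod μ) :=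
        integral_mono hhinge hbound fun p ↦ hinge_le_one_add_abs _
    _ = 1 + ∫ p, |X p.1 - X p.2| ∂(μ.prod μ) := by
        rw [integral_add (integrable_const 1) (hdiff.integrable one_le_two).abs]; simp
    _ ≤ 1 + √(2 * Var[X; μ]) := by grw [integral_abs_sub_prod_le hX]

end Moments

section Covariance

variable {Ω ι : Type*} {mΩ : MeasurableSpace Ω} [Fintype ι]

noncomputable def covarianceMatrix (f : Ω → EuclideanSpace ℝ ι) (μ : Measure Ω) :
    Matrix ι ι ℝ :=
  .of fun i j ↦ cov[(f · i), (f · j); μ]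

lemma variance_inner_eq_dotProduct_covarianceMatrix {μ : Measure Ω} [IsFiniteMeasure μ]
    {f : Ω → EuclideanSpace ℝ ι} (hf : MemLp f 2 μ) (v : EuclideanSpace ℝ ι) :
    Var[(⟪v, f ·⟫); μ] = v ⬝ᵥ covarianceMatrix f μ *ᵥ v := by
  have hcoord (i : ι) : MemLp (fun ω ↦ v i * f ω i) 2 μ := (hf.eval_piLp i).const_mul _
  have hinner : (⟪v, f ·⟫) = fun ω ↦ ∑ i, v i * f ω i := by
    ext ω; simp [PiLp.inner_apply, mul_comm]
  rw [hinner, ← covariance_self (memLp_finsetSum _ fun i _ ↦ hcoord i).aemeasurable,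
    covariance_fun_sum_fun_sum hcoord hcoord]
  simp only [covariance_const_mul_left, covariance_const_mul_right, dotProduct, mulVec,
    covarianceMatrix, of_apply, Finset.mul_sum]
  refine Finset.sum_congr rfl fun i _ ↦ Finset.sum_congr rfl fun j _ ↦ by ring

lemma Matrix.dotProduct_mulVec_self_le [DecidableEq ι] (A : Matrix ι ι ℝ)
    (v : EuclideanSpace ℝ ι) :
    v ⬝ᵥ A *ᵥ v ≤ ‖toEuclideanCLM (𝕜 := ℝ) A‖ * ‖v‖ ^ 2 := by
  rw [← inner_toEuclideanCLM]
  calc ⟪v, toEuclideanCLM (𝕜 := ℝ) A v⟫ ≤ ‖v‖ * ‖toEuclideanCLM (𝕜 := ℝ) A v‖ :=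
        real_inner_le_norm _ _
    _ ≤ ‖v‖ * (‖toEuclideanCLM (𝕜 := ℝ) A‖ * ‖v‖) := by grw [ContinuousLinearMap.le_opNorm]
    _ = ‖toEuclideanCLM (𝕜 := ℝ) A‖ * ‖v‖ ^ 2 := by ring

end Covariance

/-- Class collision lemma (binary hinge case): for `x, x⁺, x⁻` i.i.d. from one class
distribution, the excess hinge contrastive loss is controlled by the intraclass
deviation `√‖Σ(f,c)‖₂ · E‖f(x)‖`. -/
theorem class_collision_hinge
    {X : Type*} [MeasurableSpace X] {d : ℕ}
    (Dc : Measure X) [IsProbabilityMeasure Dc]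
    (f : X → EuclideanSpace ℝ (Fin d)) (hfm : Measurable f)
    (R : ℝ) (hfb : ∀ x, ‖f x‖ ≤ R)
    (m : EuclideanSpace ℝ (Fin d)) (hm : m = ∫ x, f x ∂Dc)
    (S : Matrix (Fin d) (Fin d) ℝ)
    (hS : ∀ i j, S i j = ∫ x, (f x i - m i) * (f x j - m j) ∂Dc) :
    (∫ x, ∫ xp, ∫ xm, max (1 - ⟪f x, f xp - f xm⟫) 0 ∂Dc ∂Dc ∂Dc) - 1
    ≤ Real.sqrt 2 * Real.sqrt ‖Matrix.toEuclideanCLM (𝕜 := ℝ) S‖ *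
        ∫ x, ‖f x‖ ∂Dc := by
  have hf : MemLp f 2 Dc := .of_bound hfm.aestronglyMeasurable R (.of_forall hfb)
  have hS_cov : S = covarianceMatrix f Dc := by
    ext i j
    rw [hS, hm, eval_integral_piLp fun i ↦ (hf.eval_piLp i).integrable one_le_two,
      eval_integral_piLp fun i ↦ (hf.eval_piLp i).integrable one_le_two]
    rfl
  set C := √2 * √‖toEuclideanCLM (𝕜 := ℝ) S‖
  have hloss (x : X) :
      ∫ xp, ∫ xm, max (1 - ⟪f x, f xp - f xm⟫) 0 ∂Dc ∂Dc ≤ 1 + C * ‖f x‖ := by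
    simp_rw [inner_sub_right]
    calc _ ≤ 1 + √(2 * Var[(⟪f x, f ·⟫); Dc]) :=
          integral_integral_hinge_sub_le (hf.const_inner _)
      _ ≤ 1 + √(2 * (‖toEuclideanCLM (𝕜 := ℝ) S‖ * ‖f x‖ ^ 2)) := by
          rw [variance_inner_eq_dotProduct_covarianceMatrix hf, ← hS_cov]
          grw [dotProduct_mulVec_self_le]
      _ = 1 + C * ‖f x‖ := by
          rw [Real.sqrt_mul zero_le_two, Real.sqrt_mul (norm_nonneg _),
            Real.sqrt_sq (norm_nonneg _)]
          ring
  have hnorm : Integrable (fun x ↦ C * ‖f x‖) Dc := (hf.integrable one_le_two).norm.const_mul C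
  calc _ ≤ (∫ x, (1 + C * ‖f x‖) ∂Dc) - 1 := by
        have hloss_nonneg (x : X) :
            0 ≤ ∫ xp, ∫ xm, max (1 - ⟪f x, f xp - f xm⟫) 0 ∂Dc ∂Dc :=
          integral_nonneg fun _ ↦ integral_nonneg fun _ ↦ le_max_right _ _
        exact sub_le_sub_right (integral_mono_of_nonneg (.of_forall hloss_nonneg)
          ((integrable_const 1).add hnorm) (.of_forall hloss)) 1
    _ = C * ∫ x, ‖f x‖ ∂Dc := by
        rw [integral_add (integrable_const 1) hnorm, integral_const_mul]
        simp
end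

section
/- Suppose for every class c the random vector f(X) with X ∼ D_c is σ²-sub-Gaussian in every direction, and ‖f(x)‖ ≤ R for all x. Fix classes c⁺, c⁻ and a point x, and let μ = f(x)ᵀ(μ_{c⁻} − μ_{c⁺}). Then for z = f(x)ᵀ(f(x⁻) − μ_{c⁻}) − f(x)ᵀ(f(x⁺) − μ_{c⁺}) with x⁺ ∼ D_{c⁺}, x⁻ ∼ D_{c⁻} independent: z is 2R²σ²-sub-Gaussian, and for γ − 1 = 2Rσ√(2 log R + log(3/ε)) with R ≥ 1, ε > 0, one has E_z[(1 + μ + z)₊] ≤ γ(1 + μ/γ)₊ + ε. -/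
open MeasureTheory
open scoped RealInnerProductSpace BigOperators

lemma mgf_one_side {X : Type*} [MeasurableSpace X] {d : ℕ}
    (D : Measure X) [IsProbabilityMeasure D]
    (f : X → EuclideanSpace ℝ (Fin d)) (hfi : Integrable f D)
    (R σ : ℝ)
    (hsub : ∀ u : EuclideanSpace ℝ (Fin d), ‖u‖ = 1 → ∀ lam : ℝ,
      ∫ x, Real.exp (lam * (⟪u, f x⟫ - ∫ y, ⟪u, f y⟫ ∂D)) ∂D
        ≤ Real.exp (lam ^ 2 * σ ^ 2 / 2))
    (a : EuclideanSpace ℝ (Fin d)) (ha : ‖a‖ ≤ R) (lam : ℝ) :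
    ∫ x, Real.exp (lam * ⟪a, f x - ∫ y, f y ∂D⟫) ∂D
      ≤ Real.exp (lam ^ 2 * R ^ 2 * σ ^ 2 / 2) := by
  by_cases ha0 : a = 0
  · simp only [ha0, inner_zero_left, mul_zero, Real.exp_zero, integral_const, measure_univ,
      ENNReal.toReal_one, probReal_univ, smul_eq_mul, one_mul]
    exact Real.one_le_exp (by positivity)
  · have hna : (0:ℝ) < ‖a‖ := norm_pos_iff.mpr ha0
    set u : EuclideanSpace ℝ (Fin d) := ‖a‖⁻¹ • a with hu
    have hu1 : ‖u‖ = 1 := by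
      rw [hu, norm_smul, norm_inv, norm_norm, inv_mul_cancel₀ hna.ne']
    have hinner : ∀ v : EuclideanSpace ℝ (Fin d), ⟪a, v⟫ = ‖a‖ * ⟪u, v⟫ := by
      intro v
      rw [hu, real_inner_smul_left]
      field_simp
    have hmean : (∫ y, ⟪u, f y⟫ ∂D) = ⟪u, ∫ y, f y ∂D⟫ := integral_inner hfi u
    have h1 : ∀ x, lam * ⟪a, f x - ∫ y, f y ∂D⟫
        = (lam * ‖a‖) * (⟪u, f x⟫ - ∫ y, ⟪u, f y⟫ ∂D) := by
      intro x
      rw [hinner, hmean, inner_sub_right]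
      ring
    calc ∫ x, Real.exp (lam * ⟪a, f x - ∫ y, f y ∂D⟫) ∂D
        = ∫ x, Real.exp ((lam * ‖a‖) * (⟪u, f x⟫ - ∫ y, ⟪u, f y⟫ ∂D)) ∂D := by
          simp_rw [h1]
      _ ≤ Real.exp ((lam * ‖a‖) ^ 2 * σ ^ 2 / 2) := hsub u hu1 _
      _ ≤ Real.exp (lam ^ 2 * R ^ 2 * σ ^ 2 / 2) := by
          apply Real.exp_le_exp.mpr
          have h2 : (lam * ‖a‖) ^ 2 ≤ lam ^ 2 * R ^ 2 := by
            rw [mul_pow]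
            exact mul_le_mul_of_nonneg_left
              (pow_le_pow_left₀ (norm_nonneg a) ha 2) (sq_nonneg lam)
          nlinarith [sq_nonneg σ]

set_option maxHeartbeats 1000000 in
/-- Sub-Gaussian pointwise bound: with `f` bounded by `R` and `σ²`-sub-Gaussian in every
direction under both class distributions, the variable
`z = f(x₀)ᵀ(f(x⁻) − μ_{c⁻}) − f(x₀)ᵀ(f(x⁺) − μ_{c⁺})` is `2R²σ²`-sub-Gaussian, and
`E[(1 + μ + z)₊] ≤ γ(1 + μ/γ)₊ + ε` for `γ = 1 + 2Rσ√(2 log R + log(3/ε))`. -/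
theorem subgaussian_pointwise_bound
    {X : Type*} [MeasurableSpace X] {d : ℕ}
    (Dp Dm : Measure X) [IsProbabilityMeasure Dp] [IsProbabilityMeasure Dm]
    (f : X → EuclideanSpace ℝ (Fin d)) (hfm : Measurable f)
    (R : ℝ) (hR : 1 ≤ R) (hfb : ∀ x, ‖f x‖ ≤ R)
    (σ : ℝ) (hσ : 0 < σ)
    (hsubp : ∀ u : EuclideanSpace ℝ (Fin d), ‖u‖ = 1 → ∀ lam : ℝ,
      ∫ x, Real.exp (lam * (⟪u, f x⟫ - ∫ y, ⟪u, f y⟫ ∂Dp)) ∂Dp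
        ≤ Real.exp (lam ^ 2 * σ ^ 2 / 2))
    (hsubm : ∀ u : EuclideanSpace ℝ (Fin d), ‖u‖ = 1 → ∀ lam : ℝ,
      ∫ x, Real.exp (lam * (⟪u, f x⟫ - ∫ y, ⟪u, f y⟫ ∂Dm)) ∂Dm
        ≤ Real.exp (lam ^ 2 * σ ^ 2 / 2))
    (x₀ : X) (ε : ℝ) (hε : 0 < ε)
    (μp μm : EuclideanSpace ℝ (Fin d))
    (hμp : μp = ∫ x, f x ∂Dp) (hμm : μm = ∫ x, f x ∂Dm)
    (μ : ℝ) (hμ : μ = ⟪f x₀, μm - μp⟫)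
    (z : X × X → ℝ)
    (hz : ∀ q : X × X, z q = ⟪f x₀, f q.2 - μm⟫ - ⟪f x₀, f q.1 - μp⟫)
    (γ : ℝ) (hγ : γ = 1 + 2 * R * σ * Real.sqrt (2 * Real.log R + Real.log (3 / ε))) :
    (∀ lam : ℝ, ∫ q, Real.exp (lam * z q) ∂(Dp.prod Dm)
        ≤ Real.exp (lam ^ 2 * (2 * R ^ 2 * σ ^ 2) / 2)) ∧
    (∫ q, max (1 + μ + z q) 0 ∂(Dp.prod Dm) ≤ γ * max (1 + μ / γ) 0 + ε) := by
  have hR0 : (0:ℝ) < R := lt_of_lt_of_le one_pos hR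
  have hfx₀ : ‖f x₀‖ ≤ R := hfb x₀
  have hfip : Integrable f Dp :=
    Integrable.mono' (integrable_const R) hfm.aestronglyMeasurable (ae_of_all _ hfb)
  have hfim : Integrable f Dm :=
    Integrable.mono' (integrable_const R) hfm.aestronglyMeasurable (ae_of_all _ hfb)
  -- bounds on the means
  have hmean_bound : ∀ (D : Measure X) [IsProbabilityMeasure D],
      Integrable f D → ‖∫ x, f x ∂D‖ ≤ R := by
    intro D _ hfi
    calc ‖∫ x, f x ∂D‖ ≤ ∫ x, ‖f x‖ ∂D := norm_integral_le_integral_norm f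
      _ ≤ ∫ _x, R ∂D := integral_mono hfi.norm (integrable_const R) hfb
      _ = R := by simp
  have hμpR : ‖μp‖ ≤ R := by rw [hμp]; exact hmean_bound Dp hfip
  have hμmR : ‖μm‖ ≤ R := by rw [hμm]; exact hmean_bound Dm hfim
  -- Part 1 : MGF bound
  have key : ∀ lam : ℝ, ∫ q, Real.exp (lam * z q) ∂(Dp.prod Dm)
      ≤ Real.exp (lam ^ 2 * (2 * R ^ 2 * σ ^ 2) / 2) := by
    intro lam
    have hzsplit : (fun q : X × X => Real.exp (lam * z q))
        = fun q : X × X => (fun x => Real.exp ((-lam) * ⟪f x₀, f x - μp⟫)) q.1 *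
            (fun y => Real.exp (lam * ⟪f x₀, f y - μm⟫)) q.2 := by
      funext q
      rw [hz q, ← Real.exp_add]
      congr 1
      ring
    calc ∫ q, Real.exp (lam * z q) ∂(Dp.prod Dm)
        = (∫ x, Real.exp ((-lam) * ⟪f x₀, f x - μp⟫) ∂Dp) *
            (∫ y, Real.exp (lam * ⟪f x₀, f y - μm⟫) ∂Dm) := by
          rw [hzsplit]
          exact integral_prod_mul (μ := Dp) (ν := Dm) (L := ℝ)
            (fun x => Real.exp ((-lam) * ⟪f x₀, f x - μp⟫))
            (fun y => Real.exp (lam * ⟪f x₀, f y - μm⟫))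
      _ ≤ Real.exp ((-lam) ^ 2 * R ^ 2 * σ ^ 2 / 2) * Real.exp (lam ^ 2 * R ^ 2 * σ ^ 2 / 2) := by
          apply mul_le_mul
          · rw [hμp]; exact mgf_one_side Dp f hfip R σ hsubp (f x₀) hfx₀ (-lam)
          · rw [hμm]; exact mgf_one_side Dm f hfim R σ hsubm (f x₀) hfx₀ lam
          · exact integral_nonneg fun y => (Real.exp_pos _).le
          · exact (Real.exp_pos _).le
      _ = Real.exp (lam ^ 2 * (2 * R ^ 2 * σ ^ 2) / 2) := by
          rw [← Real.exp_add]; congr 1; ring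
  refine ⟨key, ?_⟩
  -- Part 2
  set t : ℝ := 2 * Real.log R + Real.log (3 / ε) with htdef
  have htlog : t = Real.log (3 * R ^ 2 / ε) := by
    rw [htdef, show (2:ℝ) * Real.log R = Real.log (R ^ 2) by
        rw [Real.log_pow]; push_cast; ring,
      ← Real.log_mul (by positivity) (by positivity)]
    congr 1; ring
  set s : ℝ := 2 * R * σ * Real.sqrt t with hsdef
  have hs0 : 0 ≤ s := by positivity
  have hγpos : 0 < γ := by rw [hγ]; linarith
  set τ2 : ℝ := 2 * R ^ 2 * σ ^ 2 with hτ2def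
  have hτ2 : 0 < τ2 := by positivity
  set lam : ℝ := s / τ2 with hlam
  have hlam0 : 0 ≤ lam := div_nonneg hs0 hτ2.le
  have hzfun : z = fun q : X × X => ⟪f x₀, f q.2 - μm⟫ - ⟪f x₀, f q.1 - μp⟫ := funext hz
  have hzm : Measurable z := by
    rw [hzfun]
    exact (Measurable.inner measurable_const ((hfm.comp measurable_snd).sub measurable_const)).sub
      (Measurable.inner measurable_const ((hfm.comp measurable_fst).sub measurable_const))
  have hib : ∀ (w v : EuclideanSpace ℝ (Fin d)), ‖w‖ ≤ R → ‖v‖ ≤ R →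
      |⟪f x₀, w - v⟫| ≤ 2 * R ^ 2 := by
    intro w v hw hv
    calc |⟪f x₀, w - v⟫| ≤ ‖f x₀‖ * ‖w - v‖ := abs_real_inner_le_norm _ _
      _ ≤ R * (2 * R) := by
          apply mul_le_mul hfx₀ ?_ (norm_nonneg _) hR0.le
          calc ‖w - v‖ ≤ ‖w‖ + ‖v‖ := norm_sub_le _ _
            _ ≤ R + R := add_le_add hw hv
            _ = 2 * R := by ring
      _ = 2 * R ^ 2 := by ring
  have hzb : ∀ q, |z q| ≤ 4 * R ^ 2 := by
    intro q
    rw [hz q]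
    have h1 := hib (f q.2) μm (hfb _) hμmR
    have h2 := hib (f q.1) μp (hfb _) hμpR
    calc |⟪f x₀, f q.2 - μm⟫ - ⟪f x₀, f q.1 - μp⟫|
        ≤ |⟪f x₀, f q.2 - μm⟫| + |⟪f x₀, f q.1 - μp⟫| := abs_sub _ _
      _ ≤ 4 * R ^ 2 := by linarith
  have hIz : Integrable (fun q => Real.exp (lam * z q)) (Dp.prod Dm) := by
    have hm2 : Measurable fun q => Real.exp (lam * z q) := (hzm.const_mul lam).exp
    apply Integrable.mono' (integrable_const (Real.exp (lam * (4 * R ^ 2))))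
      hm2.aestronglyMeasurable
    refine ae_of_all _ fun q => ?_
    rw [Real.norm_eq_abs, abs_of_pos (Real.exp_pos _)]
    exact Real.exp_le_exp.mpr
      (mul_le_mul_of_nonneg_left (le_trans (le_abs_self _) (hzb q)) hlam0)
  have hmuz : ∀ q, μ + z q = ⟪f x₀, f q.2 - f q.1⟫ := by
    intro q
    rw [hμ, hz q]
    simp only [inner_sub_right]
    ring
  have hmuzb : ∀ q, |μ + z q| ≤ 2 * R ^ 2 := by
    intro q
    rw [hmuz q]
    exact hib (f q.2) (f q.1) (hfb _) (hfb _)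
  have hR2 : (1:ℝ) ≤ R ^ 2 := by nlinarith
  have hpoint : ∀ q, max (1 + μ + z q) 0 ≤
      max (γ + μ) 0 + (3 * R ^ 2 * Real.exp (-(lam * s))) * Real.exp (lam * z q) := by
    intro q
    rcases le_or_gt s (z q) with hq | hq
    · have h1 : (1:ℝ) ≤ Real.exp (-(lam * s)) * Real.exp (lam * z q) := by
        rw [← Real.exp_add]
        apply Real.one_le_exp
        nlinarith [mul_nonneg hlam0 (sub_nonneg.mpr hq)]
      have h2 : max (1 + μ + z q) 0 ≤ 3 * R ^ 2 := by
        apply max_le ?_ (by positivity)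
        have h3 := (abs_le.mp (hmuzb q)).2
        linarith
      nlinarith [mul_le_mul_of_nonneg_left h1 (show (0:ℝ) ≤ 3 * R ^ 2 by positivity),
        le_max_right (γ + μ) (0:ℝ)]
    · have h2 : max (1 + μ + z q) 0 ≤ max (γ + μ) 0 := by
        apply max_le_max ?_ le_rfl
        rw [hγ]
        linarith
      have h3 : 0 ≤ (3 * R ^ 2 * Real.exp (-(lam * s))) * Real.exp (lam * z q) := by positivity
      linarith
  have hstep : ∫ q, max (1 + μ + z q) 0 ∂(Dp.prod Dm)
      ≤ max (γ + μ) 0 + (3 * R ^ 2 * Real.exp (-(lam * s))) * Real.exp (lam ^ 2 * τ2 / 2) := by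
    calc ∫ q, max (1 + μ + z q) 0 ∂(Dp.prod Dm)
        ≤ ∫ q, (max (γ + μ) 0 +
            (3 * R ^ 2 * Real.exp (-(lam * s))) * Real.exp (lam * z q)) ∂(Dp.prod Dm) :=
          integral_mono_of_nonneg (ae_of_all _ fun q => le_max_right _ _)
            ((integrable_const _).add (hIz.const_mul _)) (ae_of_all _ hpoint)
      _ = max (γ + μ) 0 + (3 * R ^ 2 * Real.exp (-(lam * s))) *
            ∫ q, Real.exp (lam * z q) ∂(Dp.prod Dm) := by
          rw [integral_add (integrable_const _) (hIz.const_mul _), integral_const,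
            integral_const_mul]
          simp
      _ ≤ _ := by
          apply add_le_add_right
          exact mul_le_mul_of_nonneg_left (key lam) (by positivity)
  have hmaxeq : γ * max (1 + μ / γ) 0 = max (γ + μ) 0 := by
    rw [mul_max_of_nonneg _ _ hγpos.le, mul_zero]
    congr 1
    field_simp
  have hexp : (3 * R ^ 2 * Real.exp (-(lam * s))) * Real.exp (lam ^ 2 * τ2 / 2) ≤ ε := by
    have hcomb : Real.exp (-(lam * s)) * Real.exp (lam ^ 2 * τ2 / 2)
        = Real.exp (-(s ^ 2 / (2 * τ2))) := by
      rw [← Real.exp_add]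
      congr 1
      rw [hlam]
      field_simp
      ring
    rcases le_or_gt 0 t with ht | ht
    · have hsq : s ^ 2 = 4 * R ^ 2 * σ ^ 2 * t := by
        rw [hsdef, mul_pow, mul_pow, Real.sq_sqrt ht]; ring
      have hss : s ^ 2 / (2 * τ2) = t := by
        rw [hsq, hτ2def]
        field_simp
        ring
      have hexpt : Real.exp (-t) = ε / (3 * R ^ 2) := by
        rw [htlog, ← Real.log_inv, Real.exp_log (by positivity), inv_div]
      have hval : (3 * R ^ 2 * Real.exp (-(lam * s))) * Real.exp (lam ^ 2 * τ2 / 2) = ε := by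
        calc (3 * R ^ 2 * Real.exp (-(lam * s))) * Real.exp (lam ^ 2 * τ2 / 2)
            = 3 * R ^ 2 * (Real.exp (-(lam * s)) * Real.exp (lam ^ 2 * τ2 / 2)) := by ring
          _ = 3 * R ^ 2 * (ε / (3 * R ^ 2)) := by rw [hcomb, hss, hexpt]
          _ = ε := by field_simp
      exact le_of_eq hval
    · have hst : Real.sqrt t = 0 := Real.sqrt_eq_zero'.mpr ht.le
      have hsz : s = 0 := by rw [hsdef, hst, mul_zero]
      have h3R : 3 * R ^ 2 < ε := by
        by_contra hcon
        push_neg at hcon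
        have h4 : (1:ℝ) ≤ 3 * R ^ 2 / ε := (one_le_div hε).mpr hcon
        have h5 : 0 ≤ t := htlog ▸ Real.log_nonneg h4
        linarith
      have hlamz : lam = 0 := by rw [hlam, hsz, zero_div]
      rw [hlamz, hsz]
      simp
      linarith
  rw [hmaxeq]
  linarith
end

section
/- Under the sub-Gaussian concentration assumption (f(X) is σ²-sub-Gaussian in every direction for each class, ‖f‖ ≤ R, R ≥ 1), for every ε > 0 the different-class unsupervised hinge loss satisfies L_un^≠(f) ≤ γ · L_{γ,sup}^μ(f) + ε, where γ = 1 + 2Rσ√(2 log R + log(3/ε)), and L_{γ,sup}^μ(f) is the mean-classifier average binary supervised loss with margin-γ hinge loss ℓ_γ(v) = (1 − v/γ)₊. -/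
open MeasureTheory
open scoped RealInnerProductSpace BigOperators


lemma my_integrable_of_bdd {X : Type*} [MeasurableSpace X] (ν : Measure X)
    (hν : IsProbabilityMeasure ν) {g : X → ℝ} (hg : Measurable g) {Cb : ℝ}
    (h : ∀ x, |g x| ≤ Cb) : Integrable g ν := by
  haveI := hν
  exact (integrable_const Cb).mono' hg.aestronglyMeasurable
    (Filter.Eventually.of_forall (by simpa [Real.norm_eq_abs] using h))

lemma my_hinge_ptwise {R lam a m A B : ℝ} (hR : 1 ≤ R) (hz : 1 + (m + (A + B)) ≤ 3*R^2)
    (hlam : 0 ≤ lam) (_ha : 0 ≤ a) :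
    max (1 + (m + (A + B))) 0
      ≤ max ((1+a) + m) 0 + 3*R^2 * Real.exp (-(lam*a)) * (Real.exp (lam*A) * Real.exp (lam*B)) := by
  have hR0 : (0:ℝ) < R := lt_of_lt_of_le one_pos hR
  rcases le_or_gt (A+B) a with h | h
  · have h1 : max (1 + (m + (A+B))) 0 ≤ max ((1+a)+m) 0 := max_le_max (by linarith) le_rfl
    have h2 : 0 ≤ 3*R^2 * Real.exp (-(lam*a)) * (Real.exp (lam*A) * Real.exp (lam*B)) := by positivity
    linarith
  · have hmax : max (1 + (m+(A+B))) 0 ≤ 3*R^2 := max_le hz (by nlinarith)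
    have hone : (1:ℝ) ≤ Real.exp (-(lam*a)) * (Real.exp (lam*A) * Real.exp (lam*B)) := by
      rw [← Real.exp_add, ← Real.exp_add]
      apply Real.one_le_exp
      nlinarith [mul_le_mul_of_nonneg_left h.le hlam]
    have h3 : 3*R^2 * 1 ≤ 3*R^2 * (Real.exp (-(lam*a)) * (Real.exp (lam*A) * Real.exp (lam*B))) :=
      mul_le_mul_of_nonneg_left hone (by positivity)
    have h4 : 0 ≤ max ((1+a)+m) 0 := le_max_right _ _
    nlinarith


lemma my_key_mgf {X : Type*} [MeasurableSpace X] {d : ℕ} (ν : Measure X)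
    (hν : IsProbabilityMeasure ν)
    (f : X → EuclideanSpace ℝ (Fin d)) (hfm : Measurable f)
    (R σ : ℝ) (hfb : ∀ x, ‖f x‖ ≤ R)
    (hsubν : ∀ u : EuclideanSpace ℝ (Fin d), ‖u‖ = 1 → ∀ lam : ℝ,
      ∫ x, Real.exp (lam * (⟪u, f x⟫ - ∫ y, ⟪u, f y⟫ ∂ν)) ∂ν ≤ Real.exp (lam ^ 2 * σ ^ 2 / 2))
    (v : EuclideanSpace ℝ (Fin d)) (hv : ‖v‖ ≤ R) (lam : ℝ) :
    ∫ y, Real.exp (lam * ⟪v, f y - ∫ z, f z ∂ν⟫) ∂ν ≤ Real.exp (lam^2 * R^2 * σ^2 / 2) := by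
  haveI := hν
  have hR0 : (0:ℝ) ≤ R := le_trans (norm_nonneg v) hv
  by_cases hv0 : v = 0
  · simp only [hv0, inner_zero_left, mul_zero, Real.exp_zero]
    rw [integral_const]
    simp only [measure_univ, probReal_univ, ENNReal.toReal_one, one_smul]
    exact Real.one_le_exp (by positivity)
  · set nv := ‖v‖ with hnv_def
    have hnv : 0 < nv := norm_pos_iff.2 hv0
    set u : EuclideanSpace ℝ (Fin d) := nv⁻¹ • v with hu_def
    have hu : ‖u‖ = 1 := by
      rw [hu_def, norm_smul, norm_inv, Real.norm_eq_abs, abs_of_pos hnv]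
      exact inv_mul_cancel₀ hnv.ne'
    have hvu : ∀ w : EuclideanSpace ℝ (Fin d), ⟪v, w⟫ = nv * ⟪u, w⟫ := by
      intro w
      rw [hu_def, real_inner_smul_left]
      field_simp
    have hfint : Integrable f ν :=
      (integrable_const R).mono' hfm.aestronglyMeasurable
        (Filter.Eventually.of_forall (by simpa using hfb))
    have hmean : ⟪u, ∫ z, f z ∂ν⟫ = ∫ z, ⟪u, f z⟫ ∂ν := (integral_inner hfint u).symm
    have hident : ∀ y, lam * ⟪v, f y - ∫ z, f z ∂ν⟫
        = (lam * nv) * (⟪u, f y⟫ - ∫ z, ⟪u, f z⟫ ∂ν) := by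
      intro y
      rw [inner_sub_right, hvu, hvu (∫ z, f z ∂ν), hmean]
      ring
    calc ∫ y, Real.exp (lam * ⟪v, f y - ∫ z, f z ∂ν⟫) ∂ν
        = ∫ y, Real.exp ((lam * nv) * (⟪u, f y⟫ - ∫ z, ⟪u, f z⟫ ∂ν)) ∂ν := by
          congr 1; funext y; rw [hident y]
      _ ≤ Real.exp ((lam * nv)^2 * σ^2 / 2) := hsubν u hu (lam * nv)
      _ ≤ Real.exp (lam^2 * R^2 * σ^2 / 2) := by
          apply Real.exp_le_exp.2
          have h1 : nv^2 ≤ R^2 := pow_le_pow_left₀ hnv.le hv 2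
          have h2 := mul_le_mul_of_nonneg_left h1 (sq_nonneg lam)
          nlinarith [sq_nonneg σ]

lemma my_arith {R σ ε a lam : ℝ} (hR : 1 ≤ R) (hσ : 0 < σ) (hε : 0 < ε)
    (ha : a = 2*R*σ*Real.sqrt (2*Real.log R + Real.log (3/ε)))
    (hlam : lam = a/(2*R^2*σ^2)) :
    3*R^2 * Real.exp (-(lam*a)) * (Real.exp (lam^2*R^2*σ^2/2) * Real.exp (lam^2*R^2*σ^2/2)) ≤ ε := by
  have hR0 : (0:ℝ) < R := lt_of_lt_of_le one_pos hR
  set L := 2*Real.log R + Real.log (3/ε) with hL_def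
  have hLlog : L = Real.log (3*R^2/ε) := by
    have hRne : R ≠ 0 := hR0.ne'
    rw [hL_def, Real.log_div (mul_ne_zero (by norm_num) (pow_ne_zero 2 hRne)) hε.ne',
      Real.log_div (by norm_num) hε.ne',
      Real.log_mul (by norm_num) (pow_ne_zero 2 hRne), Real.log_pow]
    push_cast; ring
  rw [← Real.exp_add, mul_assoc, ← Real.exp_add]
  rcases le_or_gt 0 L with hL | hL
  · have hs : Real.sqrt L ^ 2 = L := Real.sq_sqrt hL
    have ha2 : a^2 = 4*R^2*σ^2*L := by rw [ha, mul_pow, hs]; ring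
    have hE : -(lam*a) + (lam^2*R^2*σ^2/2 + lam^2*R^2*σ^2/2) = -L := by
      have h1 : -(lam*a) + (lam^2*R^2*σ^2/2 + lam^2*R^2*σ^2/2) = -(a^2/(4*R^2*σ^2)) := by
        rw [hlam]; field_simp; ring
      rw [h1, ha2]
      field_simp
    rw [hE, Real.exp_neg, hLlog, Real.exp_log (by positivity), inv_div]
    exact le_of_eq (by field_simp)
  · have hs : Real.sqrt L = 0 := Real.sqrt_eq_zero'.2 hL.le
    have ha0 : a = 0 := by rw [ha, hs, mul_zero]
    have h3R : 3*R^2 < ε := by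
      have := (Real.log_neg_iff (by positivity)).1 (hLlog ▸ hL)
      calc 3*R^2 = (3*R^2/ε) * ε := by field_simp
        _ < 1 * ε := by apply mul_lt_mul_of_pos_right this hε
        _ = ε := one_mul ε
    rw [ha0] at hlam
    rw [ha0, hlam]
    norm_num
    linarith

lemma my_abs_max {c z b : ℝ} (hc : 0 ≤ c) (hz : |z| ≤ b) : |max (c+z) 0| ≤ c+b := by
  have h1 := abs_le.1 hz
  have hb0 : 0 ≤ b := le_trans (abs_nonneg z) hz
  rw [abs_of_nonneg (le_max_right _ _)]
  exact max_le (by linarith [h1.2]) (by linarith)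

lemma my_pair_bound {X : Type*} [MeasurableSpace X] {d : ℕ} (νp νm : Measure X)
    (hνp : IsProbabilityMeasure νp) (hνm : IsProbabilityMeasure νm)
    (f : X → EuclideanSpace ℝ (Fin d)) (hfm : Measurable f)
    (R : ℝ) (hR : 1 ≤ R) (hfb : ∀ x, ‖f x‖ ≤ R)
    (σ : ℝ) (hσ : 0 < σ) (ε : ℝ) (hε : 0 < ε)
    (hsubp : ∀ u : EuclideanSpace ℝ (Fin d), ‖u‖ = 1 → ∀ lam : ℝ,
      ∫ x, Real.exp (lam * (⟪u, f x⟫ - ∫ y, ⟪u, f y⟫ ∂νp)) ∂νp ≤ Real.exp (lam ^ 2 * σ ^ 2 / 2))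
    (hsubm : ∀ u : EuclideanSpace ℝ (Fin d), ‖u‖ = 1 → ∀ lam : ℝ,
      ∫ x, Real.exp (lam * (⟪u, f x⟫ - ∫ y, ⟪u, f y⟫ ∂νm)) ∂νm ≤ Real.exp (lam ^ 2 * σ ^ 2 / 2))
    (μp μm : EuclideanSpace ℝ (Fin d)) (hμp : μp = ∫ x, f x ∂νp) (hμm : μm = ∫ x, f x ∂νm)
    (γ : ℝ) (hγ : γ = 1 + 2 * R * σ * Real.sqrt (2 * Real.log R + Real.log (3 / ε))) :
    ∫ x, ∫ xp, ∫ xm, max (1 + ⟪f x, f xm - f xp⟫) 0 ∂νm ∂νp ∂νp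
      ≤ γ * ∫ x, max (1 - ⟪f x, μp - μm⟫ / γ) 0 ∂νp + ε := by
  haveI := hνp; haveI := hνm
  have hR0 : (0:ℝ) < R := lt_of_lt_of_le one_pos hR
  set a := 2*R*σ*Real.sqrt (2*Real.log R + Real.log (3/ε)) with ha_def
  have ha0 : 0 ≤ a := by positivity
  set lam := a/(2*R^2*σ^2) with hlam_def
  have hlam0 : 0 ≤ lam := by positivity
  have hγa : γ = 1 + a := hγ
  have hγpos : 0 < γ := by rw [hγa]; linarith
  set M := Real.exp (lam^2*R^2*σ^2/2) with hM_def
  -- norms of the means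
  have hfint : ∀ (ν : Measure X), IsProbabilityMeasure ν → Integrable f ν := by
    intro ν hν; haveI := hν
    exact (integrable_const R).mono' hfm.aestronglyMeasurable
      (Filter.Eventually.of_forall (by simpa using hfb))
  have hmean_norm : ∀ (ν : Measure X) (hν : IsProbabilityMeasure ν), ‖∫ x, f x ∂ν‖ ≤ R := by
    intro ν hν; haveI := hν
    refine le_trans (norm_integral_le_integral_norm f) ?_
    calc ∫ x, ‖f x‖ ∂ν ≤ ∫ _x, R ∂ν :=
          integral_mono (hfint ν hν).norm (integrable_const R) hfb
      _ = R := by simp [measure_univ]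
  have hμRp : ‖μp‖ ≤ R := hμp ▸ hmean_norm νp hνp
  have hμRm : ‖μm‖ ≤ R := hμm ▸ hmean_norm νm hνm
  -- measurability helper
  have hmeas : ∀ (w : EuclideanSpace ℝ (Fin d)) (c : EuclideanSpace ℝ (Fin d)),
      Measurable fun y => ⟪w, f y - c⟫ := fun w c =>
    Measurable.inner measurable_const (hfm.sub measurable_const)
  -- pointwise-in-x bound
  have hx : ∀ x, ∫ xp, ∫ xm, max (1 + ⟪f x, f xm - f xp⟫) 0 ∂νm ∂νp
      ≤ max (γ + ⟪f x, μm - μp⟫) 0 + ε := by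
    intro x
    set v := f x with hv_def
    have hvR : ‖v‖ ≤ R := hfb x
    have hib : ∀ (w1 w2 : EuclideanSpace ℝ (Fin d)), ‖w1‖ ≤ R → ‖w2‖ ≤ R →
        |⟪v, w1 - w2⟫| ≤ 2*R^2 := by
      intro w1 w2 h1 h2
      calc |⟪v, w1-w2⟫| ≤ ‖v‖ * ‖w1-w2‖ := abs_real_inner_le_norm _ _
        _ ≤ R * (2*R) :=
            mul_le_mul hvR (le_trans (norm_sub_le _ _) (by linarith)) (norm_nonneg _) hR0.le
        _ = 2*R^2 := by ring
    set m := ⟪v, μm - μp⟫ with hm_def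
    set Kc := 3*R^2 * Real.exp (-(lam*a)) with hK_def
    have hKpos : 0 ≤ Kc := by positivity
    set Em := ∫ xm, Real.exp (lam * ⟪v, f xm - μm⟫) ∂νm with hEm_def
    set Ep := ∫ xp, Real.exp (-lam * ⟪v, f xp - μp⟫) ∂νp with hEp_def
    -- integrability of exponential integrands
    have hexp_int : ∀ (ν : Measure X) (hν : IsProbabilityMeasure ν)
        (c : EuclideanSpace ℝ (Fin d)) (t : ℝ), ‖c‖ ≤ R →
        Integrable (fun y => Real.exp (t * ⟪v, f y - c⟫)) ν := by
      intro ν hν c t hc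
      refine my_integrable_of_bdd ν hν (Real.measurable_exp.comp ((hmeas v c).const_mul t))
        (Cb := Real.exp (|t| * (2*R^2))) ?_
      intro y
      rw [abs_of_pos (Real.exp_pos _)]
      apply Real.exp_le_exp.2
      have := hib (f y) c (hfb y) hc
      calc t * ⟪v, f y - c⟫ ≤ |t * ⟪v, f y - c⟫| := le_abs_self _
        _ = |t| * |⟪v, f y - c⟫| := abs_mul _ _
        _ ≤ |t| * (2*R^2) := mul_le_mul_of_nonneg_left this (abs_nonneg t)
    -- step 1 : innermost integral
    have step1 : ∀ xp, ∫ xm, max (1 + ⟪v, f xm - f xp⟫) 0 ∂νm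
        ≤ max ((1+a) + m) 0 + Kc * Em * Real.exp (-lam * ⟪v, f xp - μp⟫) := by
      intro xp
      have hpt : ∀ xm, max (1 + ⟪v, f xm - f xp⟫) 0
          ≤ max ((1+a)+m) 0 + (Kc * Real.exp (-lam * ⟪v, f xp - μp⟫))
              * Real.exp (lam * ⟪v, f xm - μm⟫) := by
        intro xm
        have hz : ⟪v, f xm - f xp⟫ = m + (⟪v, f xm - μm⟫ + ⟪v, μp - f xp⟫) := by
          simp only [hm_def, inner_sub_right]; ring
        have hzb := hib (f xm) (f xp) (hfb xm) (hfb xp)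
        have hb : 1 + (m + (⟪v, f xm - μm⟫ + ⟪v, μp - f xp⟫)) ≤ 3*R^2 := by
          rw [← hz]
          have := abs_le.1 hzb
          nlinarith [this.2]
        have hmain := my_hinge_ptwise (R := R) (lam := lam) (a := a) (m := m)
          (A := ⟪v, f xm - μm⟫) (B := ⟪v, μp - f xp⟫) hR hb hlam0 ha0
        have hBe : Real.exp (lam * ⟪v, μp - f xp⟫) = Real.exp (-lam * ⟪v, f xp - μp⟫) := by
          congr 1
          simp only [inner_sub_right]; ring
        rw [hz]
        calc max (1 + (m + (⟪v, f xm - μm⟫ + ⟪v, μp - f xp⟫))) 0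
            ≤ max ((1+a) + m) 0 + 3*R^2 * Real.exp (-(lam*a))
              * (Real.exp (lam * ⟪v, f xm - μm⟫) * Real.exp (lam * ⟪v, μp - f xp⟫)) := hmain
          _ = max ((1+a)+m) 0 + (Kc * Real.exp (-lam * ⟪v, f xp - μp⟫))
              * Real.exp (lam * ⟪v, f xm - μm⟫) := by rw [hK_def, hBe]; ring
      have Igm : Integrable (fun xm => max (1 + ⟪v, f xm - f xp⟫) 0) νm := by
        refine my_integrable_of_bdd νm hνm
          (((Measurable.inner measurable_const (hfm.sub measurable_const)).const_add 1).max
            measurable_const) (Cb := 1 + 2*R^2) ?_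
        intro y
        exact my_abs_max zero_le_one (hib (f y) (f xp) (hfb y) (hfb xp))
      have Ige : Integrable (fun xm => Real.exp (lam * ⟪v, f xm - μm⟫)) νm :=
        hexp_int νm hνm μm lam hμRm
      calc ∫ xm, max (1 + ⟪v, f xm - f xp⟫) 0 ∂νm
          ≤ ∫ xm, (max ((1+a)+m) 0 + (Kc * Real.exp (-lam * ⟪v, f xp - μp⟫))
              * Real.exp (lam * ⟪v, f xm - μm⟫)) ∂νm :=
            integral_mono Igm ((integrable_const _).add (Ige.const_mul _))
              (fun xm => hpt xm)
        _ = max ((1+a)+m) 0 + Kc * Em * Real.exp (-lam * ⟪v, f xp - μp⟫) := by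
            rw [integral_add (integrable_const _) (Ige.const_mul _), integral_const,
              integral_const_mul]
            simp only [measure_univ, probReal_univ, ENNReal.toReal_one, one_smul, ← hEm_def]
            ring
    -- step 2 : middle integral
    have Igp : Integrable (fun xp => Real.exp (-lam * ⟪v, f xp - μp⟫)) νp :=
      hexp_int νp hνp μp (-lam) hμRp
    have step2 : ∫ xp, (∫ xm, max (1 + ⟪v, f xm - f xp⟫) 0 ∂νm) ∂νp
        ≤ max ((1+a)+m) 0 + Kc * Em * Ep := by
      calc ∫ xp, (∫ xm, max (1 + ⟪v, f xm - f xp⟫) 0 ∂νm) ∂νp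
          ≤ ∫ xp, (max ((1+a)+m) 0 + Kc * Em * Real.exp (-lam * ⟪v, f xp - μp⟫)) ∂νp :=
            integral_mono_of_nonneg
              (Filter.Eventually.of_forall fun xp =>
                integral_nonneg fun xm => le_max_right _ _)
              ((integrable_const _).add (Igp.const_mul _))
              (Filter.Eventually.of_forall step1)
        _ = max ((1+a)+m) 0 + Kc * Em * Ep := by
            rw [integral_add (integrable_const _) (Igp.const_mul _), integral_const,
              integral_const_mul]
            simp only [measure_univ, probReal_univ, ENNReal.toReal_one, one_smul, ← hEp_def]
    -- bounds on Em, Ep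
    have hEmb : Em ≤ M := by
      rw [hEm_def, hμm, hM_def]
      exact my_key_mgf νm hνm f hfm R σ hfb hsubm v hvR lam
    have hEpb : Ep ≤ M := by
      rw [hEp_def, hμp, hM_def]
      have h := my_key_mgf νp hνp f hfm R σ hfb hsubp v hvR (-lam)
      rwa [neg_sq] at h
    have hEm0 : 0 ≤ Em := integral_nonneg fun _ => (Real.exp_pos _).le
    have hEp0 : 0 ≤ Ep := integral_nonneg fun _ => (Real.exp_pos _).le
    have hM0 : 0 ≤ M := (Real.exp_pos _).le
    have htail : Kc * Em * Ep ≤ ε := by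
      have h1 : Kc * Em * Ep ≤ Kc * M * M := by
        apply mul_le_mul (mul_le_mul_of_nonneg_left hEmb hKpos) hEpb hEp0
        positivity
      have h2 : Kc * M * M = 3*R^2 * Real.exp (-(lam*a)) * (M * M) := by
        rw [hK_def]; ring
      have h3 := my_arith (R := R) (σ := σ) (ε := ε) (a := a) (lam := lam)
        hR hσ hε ha_def hlam_def
      rw [← hM_def] at h3
      linarith [h2 ▸ h1, h3]
    have hfinal : max ((1+a)+m) 0 = max (γ + ⟪f x, μm - μp⟫) 0 := by
      rw [hγa, hm_def]
    calc ∫ xp, ∫ xm, max (1 + ⟪f x, f xm - f xp⟫) 0 ∂νm ∂νp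
        ≤ max ((1+a)+m) 0 + Kc * Em * Ep := step2
      _ ≤ max (γ + ⟪f x, μm - μp⟫) 0 + ε := by rw [hfinal] at *; linarith
  -- outer integration
  have hmeas_out : Measurable fun x => max (γ + ⟪f x, μm - μp⟫) 0 + ε :=
    (((Measurable.inner_const hfm).const_add γ).max measurable_const).add_const ε
  have hint_out : Integrable (fun x => max (γ + ⟪f x, μm - μp⟫) 0 + ε) νp := by
    refine my_integrable_of_bdd νp hνp hmeas_out (Cb := (γ + 2*R^2) + ε) ?_
    intro x
    have h1 : |⟪f x, μm - μp⟫| ≤ 2*R^2 := by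
      calc |⟪f x, μm - μp⟫| ≤ ‖f x‖ * ‖μm - μp‖ := abs_real_inner_le_norm _ _
        _ ≤ R * (2*R) := mul_le_mul (hfb x)
            (le_trans (norm_sub_le _ _) (by linarith)) (norm_nonneg _) hR0.le
        _ = 2*R^2 := by ring
    have h2 := my_abs_max hγpos.le h1
    calc |max (γ + ⟪f x, μm - μp⟫) 0 + ε| ≤ |max (γ + ⟪f x, μm - μp⟫) 0| + |ε| := abs_add_le _ _
      _ ≤ (γ + 2*R^2) + ε := by rw [abs_of_pos hε]; linarith
  have houter : ∫ x, (∫ xp, ∫ xm, max (1 + ⟪f x, f xm - f xp⟫) 0 ∂νm ∂νp) ∂νp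
      ≤ ∫ x, (max (γ + ⟪f x, μm - μp⟫) 0 + ε) ∂νp :=
    integral_mono_of_nonneg
      (Filter.Eventually.of_forall fun x =>
        integral_nonneg fun xp => integral_nonneg fun xm => le_max_right _ _)
      hint_out (Filter.Eventually.of_forall hx)
  have hmax_int : Integrable (fun x => max (γ + ⟪f x, μm - μp⟫) 0) νp := by
    have h := hint_out.sub (integrable_const ε)
    exact h.congr (Filter.Eventually.of_forall fun x => by simp)
  have hsplit : ∫ x, (max (γ + ⟪f x, μm - μp⟫) 0 + ε) ∂νp
      = ∫ x, max (γ + ⟪f x, μm - μp⟫) 0 ∂νp + ε := by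
    rw [integral_add hmax_int (integrable_const ε), integral_const]
    simp [measure_univ]
  have hptmax : ∀ x, max (γ + ⟪f x, μm - μp⟫) 0 = γ * max (1 - ⟪f x, μp - μm⟫ / γ) 0 := by
    intro x
    rw [mul_max_of_nonneg _ _ hγpos.le, mul_zero]
    congr 1
    have h : ⟪f x, μm - μp⟫ = -⟪f x, μp - μm⟫ := by simp only [inner_sub_right]; ring
    rw [h]
    field_simp
    ring
  have hscale : ∫ x, max (γ + ⟪f x, μm - μp⟫) 0 ∂νp
      = γ * ∫ x, max (1 - ⟪f x, μp - μm⟫ / γ) 0 ∂νp := by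
    rw [show (fun x => max (γ + ⟪f x, μm - μp⟫) 0)
        = fun x => γ * max (1 - ⟪f x, μp - μm⟫ / γ) 0 from funext hptmax, integral_const_mul]
  calc ∫ x, ∫ xp, ∫ xm, max (1 + ⟪f x, f xm - f xp⟫) 0 ∂νm ∂νp ∂νp
      ≤ ∫ x, max (γ + ⟪f x, μm - μp⟫) 0 ∂νp + ε := by rw [← hsplit]; exact houter
    _ = γ * ∫ x, max (1 - ⟪f x, μp - μm⟫ / γ) 0 ∂νp + ε := by rw [hscale]

lemma my_sum_bound {C : Type*} [Fintype C] [DecidableEq C]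
    (ρ : C → ℝ) (γ ε : ℝ) (Jm : C → C → ℝ) (I : C → C → ℝ)
    (hρ0 : ∀ c, 0 ≤ ρ c) (hρ1 : ∑ c, ρ c = 1) (t : ℝ) (ht : t = ∑ c, (ρ c)^2)
    (hpair : ∀ cp cm, I cp cm ≤ γ * Jm cp cm + ε) :
    (∑ cp, ∑ cm, (if cp ≠ cm then ρ cp * ρ cm * I cp cm else 0))
      ≤ γ * (∑ cp, ∑ cm, (if cp ≠ cm then ρ cp * ρ cm *
          ((1/2) * Jm cp cm + (1/2) * Jm cm cp) else 0)) + (1 - t) * ε := by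
  have hρρ : ∀ cp cm : C, 0 ≤ ρ cp * ρ cm := fun cp cm => mul_nonneg (hρ0 cp) (hρ0 cm)
  have hsum_ne : (∑ cp, ∑ cm, (if cp ≠ cm then ρ cp * ρ cm else 0)) = 1 - t := by
    have hinner : ∀ cp : C, (∑ cm, (if cp ≠ cm then ρ cp * ρ cm else 0))
        = ρ cp - (ρ cp)^2 := by
      intro cp
      have h : ∀ cm : C, (if cp ≠ cm then ρ cp * ρ cm else 0)
          = ρ cp * ρ cm - (if cp = cm then ρ cp * ρ cm else 0) := by
        intro cm; by_cases h : cp = cm <;> simp [h]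
      rw [Finset.sum_congr rfl (fun cm _ => h cm), Finset.sum_sub_distrib,
        Finset.sum_ite_eq Finset.univ cp (fun cm => ρ cp * ρ cm)]
      simp only [Finset.mem_univ, if_true]
      rw [← Finset.mul_sum, hρ1]
      ring
    rw [Finset.sum_congr rfl (fun cp _ => hinner cp), Finset.sum_sub_distrib, hρ1, ht]
  have hswap : ∀ g : C → C → ℝ,
      (∑ cp, ∑ cm, (if cp ≠ cm then ρ cp * ρ cm * g cm cp else 0))
      = ∑ cp, ∑ cm, (if cp ≠ cm then ρ cp * ρ cm * g cp cm else 0) := by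
    intro g
    rw [Finset.sum_comm]
    refine Finset.sum_congr rfl fun cp _ => Finset.sum_congr rfl fun cm _ => ?_
    by_cases h : cp = cm
    · simp [h]
    · simp only [ne_eq, h, not_false_iff, if_true, Ne.symm h]
      ring
  have e1 : (∑ cp, ∑ cm, (if cp ≠ cm then ρ cp * ρ cm * (γ * Jm cp cm) else 0))
      = (∑ cp, ∑ cm, (if cp ≠ cm then ρ cp * ρ cm * (γ/2 * Jm cp cm) else 0))
        + (∑ cp, ∑ cm, (if cp ≠ cm then ρ cp * ρ cm * (γ/2 * Jm cp cm) else 0)) := by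
    rw [← Finset.sum_add_distrib]
    refine Finset.sum_congr rfl fun cp _ => ?_
    rw [← Finset.sum_add_distrib]
    refine Finset.sum_congr rfl fun cm _ => ?_
    split_ifs <;> ring
  have e3 : (∑ cp, ∑ cm, (if cp ≠ cm then ρ cp * ρ cm * (γ/2 * Jm cm cp) else 0))
      = ∑ cp, ∑ cm, (if cp ≠ cm then ρ cp * ρ cm * (γ/2 * Jm cp cm) else 0) :=
    hswap (fun a b => γ/2 * Jm a b)
  have e2 : γ * (∑ cp, ∑ cm, (if cp ≠ cm then ρ cp * ρ cm *
        ((1/2) * Jm cp cm + (1/2) * Jm cm cp) else 0))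
      = (∑ cp, ∑ cm, (if cp ≠ cm then ρ cp * ρ cm * (γ/2 * Jm cp cm) else 0))
        + (∑ cp, ∑ cm, (if cp ≠ cm then ρ cp * ρ cm * (γ/2 * Jm cm cp) else 0)) := by
    rw [Finset.mul_sum, ← Finset.sum_add_distrib]
    refine Finset.sum_congr rfl fun cp _ => ?_
    rw [Finset.mul_sum, ← Finset.sum_add_distrib]
    refine Finset.sum_congr rfl fun cm _ => ?_
    split_ifs <;> ring
  have hεsum : (∑ cp, ∑ cm, (if cp ≠ cm then ρ cp * ρ cm * ε else 0)) = (1 - t) * ε := by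
    have h : ∀ cp cm : C, (if cp ≠ cm then ρ cp * ρ cm * ε else 0)
        = (if cp ≠ cm then ρ cp * ρ cm else 0) * ε := by
      intro cp cm; split_ifs <;> ring
    calc (∑ cp, ∑ cm, (if cp ≠ cm then ρ cp * ρ cm * ε else 0))
        = ∑ cp, (∑ cm, (if cp ≠ cm then ρ cp * ρ cm else 0)) * ε := by
          refine Finset.sum_congr rfl fun cp _ => ?_
          rw [Finset.sum_mul]
          exact Finset.sum_congr rfl fun cm _ => h cp cm
      _ = (∑ cp, ∑ cm, (if cp ≠ cm then ρ cp * ρ cm else 0)) * ε := by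
          rw [Finset.sum_mul]
      _ = (1 - t) * ε := by rw [hsum_ne]
  calc (∑ cp, ∑ cm, (if cp ≠ cm then ρ cp * ρ cm * I cp cm else 0))
      ≤ ∑ cp, ∑ cm, (if cp ≠ cm then ρ cp * ρ cm * (γ * Jm cp cm + ε) else 0) := by
        refine Finset.sum_le_sum fun cp _ => Finset.sum_le_sum fun cm _ => ?_
        split_ifs with h
        · exact mul_le_mul_of_nonneg_left (hpair cp cm) (hρρ cp cm)
        · exact le_rfl
    _ = (∑ cp, ∑ cm, (if cp ≠ cm then ρ cp * ρ cm * (γ * Jm cp cm) else 0))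
        + (∑ cp, ∑ cm, (if cp ≠ cm then ρ cp * ρ cm * ε else 0)) := by
        rw [← Finset.sum_add_distrib]
        refine Finset.sum_congr rfl fun cp _ => ?_
        rw [← Finset.sum_add_distrib]
        refine Finset.sum_congr rfl fun cm _ => ?_
        split_ifs <;> ring
    _ = γ * (∑ cp, ∑ cm, (if cp ≠ cm then ρ cp * ρ cm *
          ((1/2) * Jm cp cm + (1/2) * Jm cm cp) else 0)) + (1 - t) * ε := by
        rw [e1, e2, e3, hεsum]


/-- Lemma 5.1: under intraclass sub-Gaussian concentration, the different-class
unsupervised hinge loss is bounded by `γ · L_{γ,sup}^μ(f) + ε` with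
`γ = 1 + 2Rσ√(2 log R + log(3/ε))`. -/
theorem subgaussian_competitive_bound
    {X : Type*} [MeasurableSpace X] {C : Type*} [Fintype C] [DecidableEq C] {d : ℕ}
    (ρ : C → ℝ) (hρ0 : ∀ c, 0 ≤ ρ c) (hρ1 : ∑ c, ρ c = 1)
    (hτ : ∑ c, (ρ c) ^ 2 < 1)
    (D : C → Measure X) (hD : ∀ c, IsProbabilityMeasure (D c))
    (f : X → EuclideanSpace ℝ (Fin d)) (hfm : Measurable f)
    (R : ℝ) (hR : 1 ≤ R) (hfb : ∀ x, ‖f x‖ ≤ R)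
    (σ : ℝ) (hσ : 0 < σ)
    (hsub : ∀ c, ∀ u : EuclideanSpace ℝ (Fin d), ‖u‖ = 1 → ∀ lam : ℝ,
      ∫ x, Real.exp (lam * (⟪u, f x⟫ - ∫ y, ⟪u, f y⟫ ∂(D c))) ∂(D c)
        ≤ Real.exp (lam ^ 2 * σ ^ 2 / 2))
    (μ : C → EuclideanSpace ℝ (Fin d)) (hμ : ∀ c, μ c = ∫ x, f x ∂(D c))
    (ε : ℝ) (hε : 0 < ε)
    (γ : ℝ) (hγ : γ = 1 + 2 * R * σ * Real.sqrt (2 * Real.log R + Real.log (3 / ε))) :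
    (1 / (1 - ∑ c, (ρ c) ^ 2)) *
        ∑ cp, ∑ cm, (if cp ≠ cm then ρ cp * ρ cm *
          ∫ x, ∫ xp, ∫ xm, max (1 + ⟪f x, f xm - f xp⟫) 0 ∂(D cm) ∂(D cp) ∂(D cp) else 0)
    ≤ γ * ((1 / (1 - ∑ c, (ρ c) ^ 2)) *
        ∑ cp, ∑ cm, (if cp ≠ cm then ρ cp * ρ cm *
          ((1 / 2) * ∫ x, max (1 - ⟪f x, μ cp - μ cm⟫ / γ) 0 ∂(D cp) +
           (1 / 2) * ∫ x, max (1 - ⟪f x, μ cm - μ cp⟫ / γ) 0 ∂(D cm)) else 0))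
      + ε := by
  have h1t : 0 < 1 - ∑ c, (ρ c) ^ 2 := by linarith
  have key : (∑ cp, ∑ cm, (if cp ≠ cm then ρ cp * ρ cm *
          ∫ x, ∫ xp, ∫ xm, max (1 + ⟪f x, f xm - f xp⟫) 0 ∂(D cm) ∂(D cp) ∂(D cp) else 0))
      ≤ γ * (∑ cp, ∑ cm, (if cp ≠ cm then ρ cp * ρ cm *
          ((1 / 2) * ∫ x, max (1 - ⟪f x, μ cp - μ cm⟫ / γ) 0 ∂(D cp) +
           (1 / 2) * ∫ x, max (1 - ⟪f x, μ cm - μ cp⟫ / γ) 0 ∂(D cm)) else 0))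
        + (1 - ∑ c, (ρ c) ^ 2) * ε :=
    my_sum_bound ρ γ ε
      (fun cp cm => ∫ x, max (1 - ⟪f x, μ cp - μ cm⟫ / γ) 0 ∂(D cp))
      (fun cp cm => ∫ x, ∫ xp, ∫ xm, max (1 + ⟪f x, f xm - f xp⟫) 0 ∂(D cm) ∂(D cp) ∂(D cp))
      hρ0 hρ1 (∑ c, (ρ c) ^ 2) rfl
      (fun cp cm => my_pair_bound (D cp) (D cm) (hD cp) (hD cm) f hfm R hR hfb σ hσ ε hε
        (hsub cp) (hsub cm) (μ cp) (μ cm) (hμ cp) (hμ cm) γ hγ)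
  set t := ∑ c, (ρ c) ^ 2 with ht_def
  set S1 := ∑ cp, ∑ cm, (if cp ≠ cm then ρ cp * ρ cm *
          ∫ x, ∫ xp, ∫ xm, max (1 + ⟪f x, f xm - f xp⟫) 0 ∂(D cm) ∂(D cp) ∂(D cp) else 0) with hS1
  set S2 := ∑ cp, ∑ cm, (if cp ≠ cm then ρ cp * ρ cm *
          ((1 / 2) * ∫ x, max (1 - ⟪f x, μ cp - μ cm⟫ / γ) 0 ∂(D cp) +
           (1 / 2) * ∫ x, max (1 - ⟪f x, μ cm - μ cp⟫ / γ) 0 ∂(D cm)) else 0) with hS2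
  have hmul := mul_le_mul_of_nonneg_left key (le_of_lt (one_div_pos.2 h1t))
  refine le_trans hmul (le_of_eq ?_)
  have hne : 1 - t ≠ 0 := h1t.ne'
  field_simp
end

section
/- (Block similarity bound.) For blocks x, x₁⁺,…,x_b⁺ i.i.d. from D_{c⁺} and x₁⁻,…,x_b⁻ i.i.d. from D_{c⁻} with c⁺, c⁻ ∼ ρ², define the block unsupervised loss L_un^{block}(f) = E[ℓ(f(x)ᵀ((1/b)Σ_i f(x_i⁺) − (1/b)Σ_i f(x_i⁻)))]. If ℓ is convex, then L_un^{block}(f) ≤ L_un(f), where L_un(f) = E[ℓ(f(x)ᵀ(f(x₁⁺) − f(x₁⁻)))] is the pairwise unsupervised loss. -/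
open MeasureTheory
open scoped RealInnerProductSpace BigOperators

/-!
By convexity of `ℓ`, the block loss at `(x, x⁺, x⁻)` is at most the average over `i` of the
pairwise losses at `(x, xᵢ⁺, xᵢ⁻)`. Projecting onto the `i`-th coordinates maps the block
distribution to the pairwise one, so each of these averaged terms integrates to the pairwise loss.
-/

section Integration

variable {α β γ : Type*} [MeasurableSpace α] [MeasurableSpace β] [MeasurableSpace γ]
  {E : Type*} [NormedAddCommGroup E] [NormedSpace ℝ E]

theorem integral_integral_integral_eq_integral_prod {μ : Measure α} {ν : Measure β}
    {κ : Measure γ} [SFinite μ] [SFinite ν] [SFinite κ] (F : α × β × γ → E)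
    (hF : Integrable F (μ.prod (ν.prod κ))) :
    ∫ x, ∫ y, ∫ z, F (x, y, z) ∂κ ∂ν ∂μ = ∫ q, F q ∂(μ.prod (ν.prod κ)) := by
  rw [integral_prod _ hF]
  refine integral_congr_ae ?_
  filter_upwards [hF.prod_right_ae] with x hx
  exact (integral_prod _ hx).symm

theorem integral_average_comp_measurePreserving {ι : Type*} [Fintype ι] [Nonempty ι]
    {μ : Measure α} {ν : Measure β} {T : ι → α → β} (hT : ∀ i, MeasurePreserving (T i) μ ν)
    {g : β → E} (hg : Integrable g ν) :
    ∫ a, (Fintype.card ι : ℝ)⁻¹ • ∑ i, g (T i a) ∂μ = ∫ b, g b ∂ν := by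
  have hcomp (i : ι) : ∫ a, g (T i a) ∂μ = ∫ b, g b ∂ν := by
    rw [← (hT i).map_eq] at hg ⊢
    exact (integral_map (hT i).measurable.aemeasurable hg.aestronglyMeasurable).symm
  have hint (i : ι) : Integrable (fun a => g (T i a)) μ := (hT i).integrable_comp_of_integrable hg
  rw [integral_smul, integral_finsetSum _ fun i _ => hint i]
  simp only [hcomp, Finset.sum_const, Finset.card_univ]
  rw [← Nat.cast_smul_eq_nsmul ℝ, smul_smul, inv_mul_cancel₀ (by positivity), one_smul]

theorem measurePreserving_prodMap_eval {ι : Type*} [Fintype ι] (κ : Measure γ) [SFinite κ]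
    (μ : Measure α) (ν : Measure β) [IsProbabilityMeasure μ] [IsProbabilityMeasure ν] (i : ι) :
    MeasurePreserving (Prod.map id (Prod.map (Function.eval i) (Function.eval i)))
      (κ.prod ((Measure.pi fun _ : ι => μ).prod (Measure.pi fun _ : ι => ν)))
      (κ.prod (μ.prod ν)) :=
  (MeasurePreserving.id κ).prod ((measurePreserving_eval _ i).prod (measurePreserving_eval _ i))

theorem Continuous.integrable_comp_of_abs_le {μ : Measure α} [IsFiniteMeasure μ]
    {ℓ : ℝ → ℝ} (hℓ : Continuous ℓ) {h : α → ℝ} (hm : Measurable h) {B : ℝ}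
    (hB : ∀ a, |h a| ≤ B) : Integrable (fun a => ℓ (h a)) μ := by
  obtain ⟨M, hM⟩ :=
    isCompact_Icc.exists_bound_of_continuousOn (hℓ.continuousOn (s := Set.Icc (-B) B))
  exact .of_bound (hℓ.measurable.comp hm).aestronglyMeasurable M
    (ae_of_all _ fun a => hM _ (Set.mem_Icc.2 (abs_le.1 (hB a))))

end Integration

section InnerProduct

variable {E : Type*} [NormedAddCommGroup E] [InnerProductSpace ℝ E] {ι : Type*} [Fintype ι]

theorem abs_inner_sub_le_of_norm_le {v w u : E} {R : ℝ} (hv : ‖v‖ ≤ R) (hw : ‖w‖ ≤ R)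
    (hu : ‖u‖ ≤ R) : |⟪v, w - u⟫| ≤ R * (R + R) :=
  (abs_real_inner_le_norm v (w - u)).trans <|
    mul_le_mul hv ((norm_sub_le w u).trans (add_le_add hw hu)) (norm_nonneg _)
      ((norm_nonneg v).trans hv)

theorem norm_card_inv_smul_sum_le [Nonempty ι] {w : ι → E} {R : ℝ} (hw : ∀ i, ‖w i‖ ≤ R) :
    ‖(Fintype.card ι : ℝ)⁻¹ • ∑ i, w i‖ ≤ R := by
  have hmem := (convex_closedBall (0 : E) R).sum_mem (t := Finset.univ)
    (w := fun _ => (Fintype.card ι : ℝ)⁻¹) (fun _ _ => by positivity)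
    (by simp [Finset.card_univ]) (fun i _ => mem_closedBall_zero_iff.2 (hw i))
  rwa [← Finset.smul_sum, mem_closedBall_zero_iff] at hmem

theorem ConvexOn.map_inner_average_sub_le [Nonempty ι] {ℓ : ℝ → ℝ}
    (hℓ : ConvexOn ℝ Set.univ ℓ) (v : E) (w u : ι → E) :
    ℓ ⟪v, (Fintype.card ι : ℝ)⁻¹ • ∑ i, w i - (Fintype.card ι : ℝ)⁻¹ • ∑ i, u i⟫ ≤
      (Fintype.card ι : ℝ)⁻¹ • ∑ i, ℓ ⟪v, w i - u i⟫ := by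
  have hinner : ⟪v, (Fintype.card ι : ℝ)⁻¹ • ∑ i, w i - (Fintype.card ι : ℝ)⁻¹ • ∑ i, u i⟫ =
      ∑ i, (Fintype.card ι : ℝ)⁻¹ • ⟪v, w i - u i⟫ := by
    simp only [inner_sub_right, real_inner_smul_right, inner_sum, smul_eq_mul, Finset.mul_sum,
      ← Finset.sum_sub_distrib, mul_sub]
  rw [hinner, Finset.smul_sum]
  exact hℓ.map_sum_le (fun _ _ => by positivity) (by simp [Finset.card_univ])
    (fun _ _ => Set.mem_univ _)

end InnerProduct

theorem integral_block_loss_le_integral_pair_loss {X : Type*} [MeasurableSpace X]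
    {E : Type*} [NormedAddCommGroup E] [InnerProductSpace ℝ E] [MeasurableSpace E]
    [BorelSpace E] [SecondCountableTopology E] {ι : Type*} [Fintype ι] [Nonempty ι]
    {κ μ ν : Measure X} [IsProbabilityMeasure κ] [IsProbabilityMeasure μ]
    [IsProbabilityMeasure ν] {f : X → E} (hfm : Measurable f) {R : ℝ} (hfb : ∀ x, ‖f x‖ ≤ R)
    {ℓ : ℝ → ℝ} (hℓ : ConvexOn ℝ Set.univ ℓ) (hℓc : Continuous ℓ) :
    ∫ x, ∫ xp : ι → X, ∫ xm : ι → X,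
        ℓ ⟪f x, (Fintype.card ι : ℝ)⁻¹ • ∑ i, f (xp i) - (Fintype.card ι : ℝ)⁻¹ • ∑ i, f (xm i)⟫
        ∂(Measure.pi fun _ => ν) ∂(Measure.pi fun _ => μ) ∂κ
      ≤ ∫ x, ∫ y, ∫ z, ℓ ⟪f x, f y - f z⟫ ∂ν ∂μ ∂κ := by
  set average : (ι → X) → E := fun v => (Fintype.card ι : ℝ)⁻¹ • ∑ i, f (v i)
  set block : X × (ι → X) × (ι → X) → ℝ := fun q => ℓ ⟪f q.1, average q.2.1 - average q.2.2⟫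
  set pair : X × X × X → ℝ := fun q => ℓ ⟪f q.1, f q.2.1 - f q.2.2⟫
  set coord : ι → X × (ι → X) × (ι → X) → X × X × X :=
    fun i => Prod.map id (Prod.map (Function.eval i) (Function.eval i))
  have hpair : Integrable pair (κ.prod (μ.prod ν)) :=
    hℓc.integrable_comp_of_abs_le (by fun_prop) fun q =>
      abs_inner_sub_le_of_norm_le (hfb _) (hfb _) (hfb _)
  have hblock :
      Integrable block (κ.prod ((Measure.pi fun _ => μ).prod (Measure.pi fun _ => ν))) :=
    hℓc.integrable_comp_of_abs_le (by fun_prop) fun q =>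
      abs_inner_sub_le_of_norm_le (hfb _) (norm_card_inv_smul_sum_le fun _ => hfb _)
        (norm_card_inv_smul_sum_le fun _ => hfb _)
  have hcoord (i : ι) := measurePreserving_prodMap_eval κ μ ν i
  have haverage : Integrable (fun q => (Fintype.card ι : ℝ)⁻¹ • ∑ i, pair (coord i q))
      (κ.prod ((Measure.pi fun _ => μ).prod (Measure.pi fun _ => ν))) :=
    (integrable_finsetSum Finset.univ fun i _ =>
      (hcoord i).integrable_comp_of_integrable hpair).smul (Fintype.card ι : ℝ)⁻¹
  calc _ = ∫ q, block q ∂(κ.prod ((Measure.pi fun _ => μ).prod (Measure.pi fun _ => ν))) :=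
        integral_integral_integral_eq_integral_prod block hblock
    _ ≤ ∫ q, (Fintype.card ι : ℝ)⁻¹ • ∑ i, pair (coord i q)
          ∂(κ.prod ((Measure.pi fun _ => μ).prod (Measure.pi fun _ => ν))) :=
        integral_mono hblock haverage fun q => hℓ.map_inner_average_sub_le _ _ _
    _ = ∫ q, pair q ∂(κ.prod (μ.prod ν)) := integral_average_comp_measurePreserving hcoord hpair
    _ = _ := (integral_integral_integral_eq_integral_prod pair hpair).symm

theorem block_loss_le_pairwise_loss_general
    {X : Type*} [MeasurableSpace X] {C : Type*} [Fintype C] {d : ℕ}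
    (ρ : C → ℝ) (hρ0 : ∀ c, 0 ≤ ρ c)
    (D : C → Measure X) [hD : ∀ c, IsProbabilityMeasure (D c)]
    (f : X → EuclideanSpace ℝ (Fin d)) (hfm : Measurable f)
    (R : ℝ) (hfb : ∀ x, ‖f x‖ ≤ R)
    (ℓ : ℝ → ℝ) (hℓ : ConvexOn ℝ Set.univ ℓ) (hℓc : Continuous ℓ)
    (b : ℕ) (hb : 0 < b) :
    ∑ cp, ∑ cm, ρ cp * ρ cm *
        ∫ x, ∫ xp : Fin b → X, ∫ xm : Fin b → X,
          ℓ ⟪f x, (b : ℝ)⁻¹ • ∑ i, f (xp i) - (b : ℝ)⁻¹ • ∑ i, f (xm i)⟫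
          ∂(Measure.pi fun _ => D cm) ∂(Measure.pi fun _ => D cp) ∂(D cp)
    ≤ ∑ cp, ∑ cm, ρ cp * ρ cm *
        ∫ x, ∫ xp, ∫ xm, ℓ ⟪f x, f xp - f xm⟫ ∂(D cm) ∂(D cp) ∂(D cp) := by
  have : Nonempty (Fin b) := ⟨⟨0, hb⟩⟩
  refine Finset.sum_le_sum fun cp _ => Finset.sum_le_sum fun cm _ => ?_
  refine mul_le_mul_of_nonneg_left ?_ (mul_nonneg (hρ0 cp) (hρ0 cm))
  simpa only [Fintype.card_fin] using
    integral_block_loss_le_integral_pair_loss (ι := Fin b) (κ := D cp) (μ := D cp) (ν := D cm)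
      hfm hfb hℓ hℓc

/-- Block similarity bound: the block contrastive loss, which averages `b` positive and
`b` negative representations inside the loss, is at most the pairwise unsupervised loss
when `ℓ` is convex. -/
theorem block_loss_le_pairwise_loss
    {X : Type*} [MeasurableSpace X] {C : Type*} [Fintype C] {d : ℕ}
    (ρ : C → ℝ) (hρ0 : ∀ c, 0 ≤ ρ c) (hρ1 : ∑ c, ρ c = 1)
    (D : C → Measure X) [hD : ∀ c, IsProbabilityMeasure (D c)]
    (f : X → EuclideanSpace ℝ (Fin d)) (hfm : Measurable f)
    (R : ℝ) (hfb : ∀ x, ‖f x‖ ≤ R)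
    (ℓ : ℝ → ℝ) (hℓ : ConvexOn ℝ Set.univ ℓ) (hℓc : Continuous ℓ)
    (b : ℕ) (hb : 0 < b) :
    ∑ cp, ∑ cm, ρ cp * ρ cm *
        ∫ x, ∫ xp : Fin b → X, ∫ xm : Fin b → X,
          ℓ ⟪f x, (b : ℝ)⁻¹ • ∑ i, f (xp i) - (b : ℝ)⁻¹ • ∑ i, f (xm i)⟫
          ∂(Measure.pi fun _ => D cm) ∂(Measure.pi fun _ => D cp) ∂(D cp)
    ≤ ∑ cp, ∑ cm, ρ cp * ρ cm *
        ∫ x, ∫ xp, ∫ xm, ℓ ⟪f x, f xp - f xm⟫ ∂(D cm) ∂(D cp) ∂(D cp) :=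
  block_loss_le_pairwise_loss_general ρ hρ0 D (hD := hD) f hfm R hfb ℓ hℓ hℓc b hb
end

section
/- (Lower bound for block loss.) For the block contrastive loss with convex ℓ satisfying ℓ(0) = 1, L_un^{block}(f) ≥ E_{c⁺,c⁻∼ρ²} E_{x∼D_{c⁺}}[ℓ(f(x)ᵀ(μ_{c⁺} − μ_{c⁻}))] = (1−τ) L_sup^μ(f) + τ, hence L_sup^μ(f) ≤ (L_un^{block}(f) − τ)/(1−τ). -/
open MeasureTheory
open scoped RealInnerProductSpace BigOperators

/-!
For fixed classes and a fixed anchor `x`, the map `u ↦ ℓ ⟪f x, u⟫` is convex and the difference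
of the two block means has expectation `μ c⁺ - μ c⁻` under the product of the block distributions,
so Jensen's inequality bounds `ℓ ⟪f x, μ c⁺ - μ c⁻⟫` by the block loss at `x`. On the diagonal
`c⁺ = c⁻` the mean-classifier term is `ℓ 0 = 1`, which contributes `τ`; symmetrizing the
off-diagonal terms gives `(1 - τ) L_sup^μ`, and the last claim is a rearrangement as `τ < 1`.
-/

section Jensen

variable {Ω E F : Type*} [MeasurableSpace Ω] {P : Measure Ω}
  [NormedAddCommGroup E] [ProperSpace E] [NormedAddCommGroup F]

lemma Continuous.integrable_comp_of_norm_le [IsFiniteMeasure P] {g : E → F} (hg : Continuous g)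
    {W : Ω → E} (hW : AEStronglyMeasurable W P) {R : ℝ} (hWR : ∀ ω, ‖W ω‖ ≤ R) :
    Integrable (fun ω => g (W ω)) P := by
  obtain ⟨M, hM⟩ := (isCompact_closedBall (0 : E) R).exists_bound_of_continuousOn hg.continuousOn
  exact .of_bound (hg.comp_aestronglyMeasurable hW) M
    (ae_of_all _ fun ω => hM _ (mem_closedBall_zero_iff.2 (hWR ω)))

lemma ConvexOn.map_integral_le_of_norm_le [NormedSpace ℝ E] [IsProbabilityMeasure P]
    {φ : E → ℝ} (hφ : ConvexOn ℝ Set.univ φ) (hφc : Continuous φ)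
    {W : Ω → E} (hW : AEStronglyMeasurable W P) {R : ℝ} (hWR : ∀ ω, ‖W ω‖ ≤ R) :
    φ (∫ ω, W ω ∂P) ≤ ∫ ω, φ (W ω) ∂P :=
  hφ.map_integral_le hφc.continuousOn isClosed_univ (ae_of_all _ fun _ => Set.mem_univ _)
    (.of_bound hW R (ae_of_all _ hWR)) (hφc.integrable_comp_of_norm_le hW hWR)

end Jensen

section InnerJensen

variable {X Y Z E : Type*} [MeasurableSpace X] [MeasurableSpace Y] [MeasurableSpace Z]
  [NormedAddCommGroup E] [InnerProductSpace ℝ E] [ProperSpace E]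

lemma integral_comp_inner_integral_sub_le (α : Measure X) (νp : Measure Y) (νm : Measure Z)
    [IsProbabilityMeasure α] [IsProbabilityMeasure νp] [IsProbabilityMeasure νm]
    {f : X → E} {U : Y → E} {V : Z → E} (hf : AEStronglyMeasurable f α)
    (hU : AEStronglyMeasurable U νp) (hV : AEStronglyMeasurable V νm) {R : ℝ}
    (hfR : ∀ x, ‖f x‖ ≤ R) (hUR : ∀ y, ‖U y‖ ≤ R) (hVR : ∀ z, ‖V z‖ ≤ R)
    {ℓ : ℝ → ℝ} (hℓ : ConvexOn ℝ Set.univ ℓ) (hℓc : Continuous ℓ) :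
    ∫ x, ℓ ⟪f x, ∫ y, U y ∂νp - ∫ z, V z ∂νm⟫ ∂α ≤
      ∫ x, ∫ y, ∫ z, ℓ ⟪f x, U y - V z⟫ ∂νm ∂νp ∂α := by
  set W : Y × Z → E := fun p => U p.1 - V p.2
  have hUi : Integrable U νp := .of_bound hU R (ae_of_all _ hUR)
  have hVi : Integrable V νm := .of_bound hV R (ae_of_all _ hVR)
  have hWm : AEStronglyMeasurable W (νp.prod νm) :=
    (hUi.comp_fst νm).aestronglyMeasurable.sub (hVi.comp_snd νp).aestronglyMeasurable
  have hWR : ∀ p, ‖W p‖ ≤ R + R := fun p => (norm_sub_le _ _).trans (add_le_add (hUR _) (hVR _))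
  have hW : ∫ p, W p ∂(νp.prod νm) = ∫ y, U y ∂νp - ∫ z, V z ∂νm := by
    rw [integral_sub (hUi.comp_fst νm) (hVi.comp_snd νp), integral_fun_fst, integral_fun_snd]
    simp
  have hsection : ∀ x, Integrable (fun p => ℓ ⟪f x, W p⟫) (νp.prod νm) := fun x =>
    (hℓc.comp (continuous_const.inner continuous_id)).integrable_comp_of_norm_le hWm hWR
  have hjensen : ∀ x, ℓ ⟪f x, ∫ y, U y ∂νp - ∫ z, V z ∂νm⟫ ≤ ∫ p, ℓ ⟪f x, W p⟫ ∂(νp.prod νm) :=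
    fun x => hW ▸ (hℓ.comp_linearMap (innerₛₗ ℝ (f x))).map_integral_le_of_norm_le
      (hℓc.comp (continuous_const.inner continuous_id)) hWm hWR
  have hiter : ∀ x, ∫ p, ℓ ⟪f x, W p⟫ ∂(νp.prod νm) = ∫ y, ∫ z, ℓ ⟪f x, U y - V z⟫ ∂νm ∂νp :=
    fun x => integral_prod _ (hsection x)
  have hjoint : Integrable (fun q : X × (Y × Z) => ℓ ⟪f q.1, W q.2⟫) (α.prod (νp.prod νm)) := by
    refine (hℓc.comp (continuous_fst.inner continuous_snd)).integrable_comp_of_norm_le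
      (W := fun q : X × (Y × Z) => (f q.1, W q.2)) ?_ (R := R + R) fun q => ?_
    · exact hf.comp_fst.prodMk hWm.comp_snd
    · have hR : 0 ≤ R := (norm_nonneg _).trans (hfR q.1)
      exact norm_prod_le_iff.2 ⟨(hfR q.1).trans (le_add_of_nonneg_right hR), hWR q.2⟩
  refine integral_mono ?_ (hjoint.integral_prod_left.congr (ae_of_all _ hiter))
    fun x => (hjensen x).trans_eq (hiter x)
  exact (hℓc.comp (continuous_id.inner continuous_const)).integrable_comp_of_norm_le hf hfR

end InnerJensen

section BlockMean

variable {X E : Type*} [NormedAddCommGroup E] [NormedSpace ℝ E]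

noncomputable def blockMean {n : ℕ} (f : X → E) (xs : Fin n → X) : E := (n : ℝ)⁻¹ • ∑ i, f (xs i)

lemma norm_blockMean_le {n : ℕ} (hn : 0 < n) {f : X → E} {R : ℝ} (hfR : ∀ x, ‖f x‖ ≤ R)
    (xs : Fin n → X) : ‖blockMean f xs‖ ≤ R := by
  rw [blockMean, norm_smul, norm_inv, Real.norm_natCast, inv_mul_le_iff₀ (by positivity)]
  calc ‖∑ i, f (xs i)‖ ≤ ∑ i, ‖f (xs i)‖ := norm_sum_le _ _
    _ ≤ ∑ _i : Fin n, R := Finset.sum_le_sum fun i _ => hfR _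
    _ = n * R := by simp

lemma integral_blockMean [MeasurableSpace X] (ν : Measure X) [IsProbabilityMeasure ν] {n : ℕ} (hn : 0 < n)
    {f : X → E} (hf : Integrable f ν) :
    ∫ xs, blockMean f xs ∂(Measure.pi fun _ : Fin n => ν) = ∫ x, f x ∂ν := by
  simp only [blockMean]
  rw [integral_smul, integral_finsetSum _ fun i _ => integrable_comp_eval hf]
  simp only [integral_comp_eval (μ := fun _ => ν) hf.aestronglyMeasurable, Finset.sum_const, Finset.card_univ,
    Fintype.card_fin, ← Nat.cast_smul_eq_nsmul ℝ, smul_smul]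
  rw [inv_mul_cancel₀ (by positivity), one_smul]

end BlockMean

section PairSums

variable {C : Type*} [Fintype C] [DecidableEq C]

lemma sum_sum_mul_eq_offDiag_add_sum_sq (ρ : C → ℝ) {G : C → C → ℝ} (hG : ∀ c, G c c = 1) :
    ∑ i, ∑ j, ρ i * ρ j * G i j =
      ∑ i, ∑ j, (if i ≠ j then ρ i * ρ j * G i j else 0) + ∑ c, ρ c ^ 2 := by
  rw [← Finset.sum_add_distrib]
  refine Finset.sum_congr rfl fun i _ => ?_
  have hsplit : ∀ j, ρ i * ρ j * G i j =
      (if i ≠ j then ρ i * ρ j * G i j else 0) + if i = j then ρ i ^ 2 else 0 := by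
    intro j
    by_cases h : i = j <;> simp [h, hG, sq]
  rw [Finset.sum_congr rfl fun j _ => hsplit j, Finset.sum_add_distrib,
    Finset.sum_ite_eq, if_pos (Finset.mem_univ i)]

lemma sum_sum_offDiag_symmetrize (ρ : C → ℝ) (G : C → C → ℝ) :
    ∑ i, ∑ j, (if i ≠ j then ρ i * ρ j * ((1 / 2) * G i j + (1 / 2) * G j i) else 0) =
      ∑ i, ∑ j, (if i ≠ j then ρ i * ρ j * G i j else 0) := by
  have hswap : ∑ i, ∑ j, (if i ≠ j then ρ i * ρ j * G j i else 0) =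
      ∑ i, ∑ j, (if i ≠ j then ρ i * ρ j * G i j else 0) := by
    rw [Finset.sum_comm]
    simp only [ne_comm, mul_comm (ρ _) (ρ _)]
  calc _ = (1 / 2) * ∑ i, ∑ j, (if i ≠ j then ρ i * ρ j * G i j else 0) +
        (1 / 2) * ∑ i, ∑ j, (if i ≠ j then ρ i * ρ j * G j i else 0) := by
        simp only [Finset.mul_sum, ← Finset.sum_add_distrib]
        refine Finset.sum_congr rfl fun i _ => Finset.sum_congr rfl fun j _ => ?_
        split_ifs <;> ring
    _ = _ := by rw [hswap]; ring

end PairSums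

theorem block_loss_lower_bound_general
    {X : Type*} [MeasurableSpace X] {C : Type*} [Fintype C] [DecidableEq C] {d : ℕ}
    (ρ : C → ℝ) (hρ0 : ∀ c, 0 ≤ ρ c)
    (hτ : ∑ c, (ρ c) ^ 2 < 1)
    (D : C → Measure X) [hD : ∀ c, IsProbabilityMeasure (D c)]
    (f : X → EuclideanSpace ℝ (Fin d)) (hfm : Measurable f)
    (R : ℝ) (hfb : ∀ x, ‖f x‖ ≤ R)
    (ℓ : ℝ → ℝ) (hℓ : ConvexOn ℝ Set.univ ℓ) (hℓc : Continuous ℓ) (hℓ0 : ℓ 0 = 1)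
    (b : ℕ) (hb : 0 < b)
    (μ : C → EuclideanSpace ℝ (Fin d)) (hμ : ∀ c, μ c = ∫ x, f x ∂(D c))
    (Lblock : ℝ)
    (hLblock : Lblock = ∑ cp, ∑ cm, ρ cp * ρ cm *
      ∫ x, ∫ xp : Fin b → X, ∫ xm : Fin b → X,
        ℓ ⟪f x, (b : ℝ)⁻¹ • ∑ i, f (xp i) - (b : ℝ)⁻¹ • ∑ i, f (xm i)⟫
        ∂(Measure.pi fun _ => D cm) ∂(Measure.pi fun _ => D cp) ∂(D cp))
    (Lsupμ : ℝ)
    (hLsupμ : Lsupμ = (1 / (1 - ∑ c, (ρ c) ^ 2)) *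
      ∑ cp, ∑ cm, (if cp ≠ cm then ρ cp * ρ cm *
        ((1 / 2) * ∫ x, ℓ ⟪f x, μ cp - μ cm⟫ ∂(D cp) +
         (1 / 2) * ∫ x, ℓ ⟪f x, μ cm - μ cp⟫ ∂(D cm)) else 0)) :
    (∑ cp, ∑ cm, ρ cp * ρ cm * ∫ x, ℓ ⟪f x, μ cp - μ cm⟫ ∂(D cp)) ≤ Lblock ∧
    (∑ cp, ∑ cm, ρ cp * ρ cm * ∫ x, ℓ ⟪f x, μ cp - μ cm⟫ ∂(D cp))
      = (1 - ∑ c, (ρ c) ^ 2) * Lsupμ + ∑ c, (ρ c) ^ 2 ∧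
    Lsupμ ≤ (Lblock - ∑ c, (ρ c) ^ 2) / (1 - ∑ c, (ρ c) ^ 2) := by
  have hA : Measurable (blockMean (n := b) f) := by unfold blockMean; fun_prop
  have hμA : ∀ c, ∫ xs, blockMean f xs ∂(Measure.pi fun _ : Fin b => D c) = μ c := fun c =>
    (hμ c).symm ▸ integral_blockMean (D c) hb (.of_bound hfm.aestronglyMeasurable R (ae_of_all _ hfb))
  have hpair : ∀ cp cm, ∫ x, ℓ ⟪f x, μ cp - μ cm⟫ ∂(D cp) ≤
      ∫ x, ∫ xp, ∫ xm, ℓ ⟪f x, blockMean f xp - blockMean f xm⟫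
        ∂(Measure.pi fun _ : Fin b => D cm) ∂(Measure.pi fun _ : Fin b => D cp) ∂(D cp) := by
    intro cp cm
    rw [← hμA cp, ← hμA cm]
    exact integral_comp_inner_integral_sub_le _ _ _ hfm.aestronglyMeasurable
      hA.aestronglyMeasurable hA.aestronglyMeasurable hfb (norm_blockMean_le hb hfb)
      (norm_blockMean_le hb hfb) hℓ hℓc
  have hbound : (∑ cp, ∑ cm, ρ cp * ρ cm * ∫ x, ℓ ⟪f x, μ cp - μ cm⟫ ∂(D cp)) ≤ Lblock :=
    hLblock ▸ Finset.sum_le_sum fun cp _ => Finset.sum_le_sum fun cm _ =>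
      mul_le_mul_of_nonneg_left (hpair cp cm) (mul_nonneg (hρ0 cp) (hρ0 cm))
  have hdecomp : (∑ cp, ∑ cm, ρ cp * ρ cm * ∫ x, ℓ ⟪f x, μ cp - μ cm⟫ ∂(D cp))
      = (1 - ∑ c, (ρ c) ^ 2) * Lsupμ + ∑ c, (ρ c) ^ 2 := by
    rw [sum_sum_mul_eq_offDiag_add_sum_sq ρ (fun c => by simp [hℓ0]), hLsupμ,
      sum_sum_offDiag_symmetrize ρ fun cp cm => ∫ x, ℓ ⟪f x, μ cp - μ cm⟫ ∂(D cp)]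
    field_simp [(sub_pos.2 hτ).ne']
  refine ⟨hbound, hdecomp, ?_⟩
  rw [le_div_iff₀ (sub_pos.2 hτ)]
  linarith

/-- Lower bound for the block contrastive loss: for convex `ℓ` with `ℓ(0) = 1`,
`L_un^{block}(f) ≥ E[ℓ(f(x)ᵀ(μ_{c⁺} − μ_{c⁻}))] = (1−τ)L_sup^μ(f) + τ`, hence
`L_sup^μ(f) ≤ (L_un^{block}(f) − τ)/(1−τ)`. -/
theorem block_loss_lower_bound
    {X : Type*} [MeasurableSpace X] {C : Type*} [Fintype C] [DecidableEq C] {d : ℕ}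
    (ρ : C → ℝ) (hρ0 : ∀ c, 0 ≤ ρ c) (hρ1 : ∑ c, ρ c = 1)
    (hτ : ∑ c, (ρ c) ^ 2 < 1)
    (D : C → Measure X) [hD : ∀ c, IsProbabilityMeasure (D c)]
    (f : X → EuclideanSpace ℝ (Fin d)) (hfm : Measurable f)
    (R : ℝ) (hfb : ∀ x, ‖f x‖ ≤ R)
    (ℓ : ℝ → ℝ) (hℓ : ConvexOn ℝ Set.univ ℓ) (hℓc : Continuous ℓ) (hℓ0 : ℓ 0 = 1)
    (b : ℕ) (hb : 0 < b)
    (μ : C → EuclideanSpace ℝ (Fin d)) (hμ : ∀ c, μ c = ∫ x, f x ∂(D c))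
    (Lblock : ℝ)
    (hLblock : Lblock = ∑ cp, ∑ cm, ρ cp * ρ cm *
      ∫ x, ∫ xp : Fin b → X, ∫ xm : Fin b → X,
        ℓ ⟪f x, (b : ℝ)⁻¹ • ∑ i, f (xp i) - (b : ℝ)⁻¹ • ∑ i, f (xm i)⟫
        ∂(Measure.pi fun _ => D cm) ∂(Measure.pi fun _ => D cp) ∂(D cp))
    (Lsupμ : ℝ)
    (hLsupμ : Lsupμ = (1 / (1 - ∑ c, (ρ c) ^ 2)) *
      ∑ cp, ∑ cm, (if cp ≠ cm then ρ cp * ρ cm *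
        ((1 / 2) * ∫ x, ℓ ⟪f x, μ cp - μ cm⟫ ∂(D cp) +
         (1 / 2) * ∫ x, ℓ ⟪f x, μ cm - μ cp⟫ ∂(D cm)) else 0)) :
    (∑ cp, ∑ cm, ρ cp * ρ cm * ∫ x, ℓ ⟪f x, μ cp - μ cm⟫ ∂(D cp)) ≤ Lblock ∧
    (∑ cp, ∑ cm, ρ cp * ρ cm * ∫ x, ℓ ⟪f x, μ cp - μ cm⟫ ∂(D cp))
      = (1 - ∑ c, (ρ c) ^ 2) * Lsupμ + ∑ c, (ρ c) ^ 2 ∧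
    Lsupμ ≤ (Lblock - ∑ c, (ρ c) ^ 2) / (1 - ∑ c, (ρ c) ^ 2) :=
  block_loss_lower_bound_general ρ hρ0 hτ D (hD := hD) f hfm R hfb ℓ hℓ hℓc hℓ0 b hb μ hμ Lblock
    hLblock Lsupμ hLsupμ
end

section
/- Combining the surrogate bound, decomposition, and class-collision lemma: for the hinge loss, every representation f with ‖f‖ ≤ R satisfies L_sup^μ(f) ≤ L_un^≠(f) + (τ/(1−τ)) · √2 · s(f), where s(f) = E_{c∼ν}[√(‖Σ(f,c)‖₂) · E_{x∼D_c}‖f(x)‖] and ν(c) ∝ ρ(c)². -/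
open MeasureTheory
open scoped RealInnerProductSpace

/-! The hinge loss is convex, so Jensen's inequality over the independent pair `(x⁺, x⁻)`
bounds the loss of the mean classifier `⟪f x, μ c⁺ - μ c⁻⟫`, for each anchor `x`, by the
contrastive loss. Symmetrizing the sum over ordered pairs of distinct classes, the supervised
loss is thus at most `L_un^≠(f)` already, and the class-collision term is nonnegative. -/

def hingeLoss (t : ℝ) : ℝ := max (1 - t) 0

lemma hingeLoss_nonneg (t : ℝ) : 0 ≤ hingeLoss t := le_max_right _ _

lemma continuous_hingeLoss : Continuous hingeLoss := by
  unfold hingeLoss; fun_prop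

lemma convexOn_hingeLoss : ConvexOn ℝ Set.univ hingeLoss :=
  ((convexOn_const 1 convex_univ).sub (concaveOn_id convex_univ)).sup
    (convexOn_const 0 convex_univ)

lemma norm_hingeLoss_le (t : ℝ) : ‖hingeLoss t‖ ≤ 1 + ‖t‖ := by
  rw [Real.norm_of_nonneg (hingeLoss_nonneg t), Real.norm_eq_abs]
  exact max_le (by linarith [neg_abs_le t]) (by positivity)

lemma norm_hingeLoss_inner_sub_le {E : Type*} [NormedAddCommGroup E] [InnerProductSpace ℝ E]
    {u a b : E} {R : ℝ} (hu : ‖u‖ ≤ R) (ha : ‖a‖ ≤ R) (hb : ‖b‖ ≤ R) :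
    ‖hingeLoss ⟪u, a - b⟫‖ ≤ 1 + R * (R + R) := by
  suffices ‖⟪u, a - b⟫‖ ≤ R * (R + R) by linarith [norm_hingeLoss_le ⟪u, a - b⟫]
  calc ‖⟪u, a - b⟫‖ ≤ ‖u‖ * ‖a - b‖ := norm_inner_le_norm _ _
    _ ≤ R * (R + R) := mul_le_mul hu ((norm_sub_le a b).trans (add_le_add ha hb))
        (norm_nonneg _) ((norm_nonneg u).trans hu)

section Jensen

variable {X E : Type*} [MeasurableSpace X] [NormedAddCommGroup E] [InnerProductSpace ℝ E]
  [CompleteSpace E] {P Q : Measure X} [IsProbabilityMeasure P] [IsProbabilityMeasure Q]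

theorem hingeLoss_inner_integral_sub_le {F : X → E} (hP : Integrable F P) (hQ : Integrable F Q)
    (v : E) :
    hingeLoss ⟪v, (∫ x, F x ∂P) - ∫ x, F x ∂Q⟫
      ≤ ∫ xp, ∫ xm, hingeLoss ⟪v, F xp - F xm⟫ ∂Q ∂P := by
  have hG : Integrable (fun p : X × X => F p.1 - F p.2) (P.prod Q) :=
    (hP.comp_fst Q).sub (hQ.comp_snd P)
  have hmean : ∫ p, F p.1 - F p.2 ∂(P.prod Q) = (∫ x, F x ∂P) - ∫ x, F x ∂Q := by
    rw [integral_sub (hP.comp_fst Q) (hQ.comp_snd P), integral_fun_fst, integral_fun_snd]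
    simp
  have hcont : Continuous fun w => hingeLoss ⟪v, w⟫ :=
    continuous_hingeLoss.comp (continuous_const.inner continuous_id)
  have hloss : Integrable (fun p : X × X => hingeLoss ⟪v, F p.1 - F p.2⟫) (P.prod Q) := by
    refine ((integrable_const 1).add (hG.norm.const_mul ‖v‖)).mono'
      (hcont.comp_aestronglyMeasurable hG.1) (ae_of_all _ fun p => ?_)
    have := norm_inner_le_norm (𝕜 := ℝ) v (F p.1 - F p.2)
    simp only [Pi.add_apply]
    linarith [norm_hingeLoss_le ⟪v, F p.1 - F p.2⟫]
  rw [← hmean, ← integral_prod _ hloss]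
  exact (convexOn_hingeLoss.comp_linearMap (innerₗ E v)).map_integral_le hcont.continuousOn
    isClosed_univ (ae_of_all _ fun _ => trivial) hG hloss

omit [CompleteSpace E] in
lemma norm_integral_le_of_forall_norm_le_s17 {f : X → E} {C : ℝ} (h : ∀ x, ‖f x‖ ≤ C) :
    ‖∫ x, f x ∂P‖ ≤ C := by
  simpa using norm_integral_le_of_norm_le_const (μ := P) (ae_of_all _ h)

theorem integral_hingeLoss_inner_integral_sub_le {f : X → E} (hf : StronglyMeasurable f) {R : ℝ}
    (hfb : ∀ x, ‖f x‖ ≤ R) :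
    ∫ x, hingeLoss ⟪f x, (∫ y, f y ∂P) - ∫ y, f y ∂Q⟫ ∂P
      ≤ ∫ x, ∫ xp, ∫ xm, hingeLoss ⟪f x, f xp - f xm⟫ ∂Q ∂P ∂P := by
  have hfint : ∀ ν : Measure X, [IsProbabilityMeasure ν] → Integrable f ν := fun ν _ =>
    .of_bound hf.aestronglyMeasurable R (ae_of_all _ hfb)
  have hmeas : StronglyMeasurable fun p : (X × X) × X => hingeLoss ⟪f p.1.1, f p.1.2 - f p.2⟫ :=
    continuous_hingeLoss.comp_stronglyMeasurable
      ((hf.comp_measurable (measurable_fst.comp measurable_fst)).inner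
        ((hf.comp_measurable (measurable_snd.comp measurable_fst)).sub
          (hf.comp_measurable measurable_snd)))
  have hbound : ∀ x, ‖∫ xp, ∫ xm, hingeLoss ⟪f x, f xp - f xm⟫ ∂Q ∂P‖ ≤ 1 + R * (R + R) :=
    fun x => by
      refine norm_integral_le_of_forall_norm_le_s17 fun xp => ?_
      refine norm_integral_le_of_forall_norm_le_s17 fun xm => ?_
      exact norm_hingeLoss_inner_sub_le (hfb x) (hfb xp) (hfb xm)
  refine integral_mono ?_ ?_ fun x =>
    hingeLoss_inner_integral_sub_le (hfint P) (hfint Q) (f x)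
  · refine .of_bound ?_ (1 + R * (R + R)) (ae_of_all _ fun x => ?_)
    · exact (continuous_hingeLoss.comp_stronglyMeasurable
        (hf.inner stronglyMeasurable_const)).aestronglyMeasurable
    · exact norm_hingeLoss_inner_sub_le (hfb x) (norm_integral_le_of_forall_norm_le_s17 hfb)
        (norm_integral_le_of_forall_norm_le_s17 hfb)
  · exact .of_bound hmeas.integral_prod_right'.integral_prod_right'.aestronglyMeasurable _
      (ae_of_all _ hbound)

end Jensen

lemma sum_offDiag_symmetrize {C : Type*} [Fintype C] [DecidableEq C] (ρ : C → ℝ)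
    (L : C → C → ℝ) :
    ∑ a, ∑ b, (if a ≠ b then ρ a * ρ b * ((1 / 2) * L a b + (1 / 2) * L b a) else 0)
      = ∑ a, ∑ b, (if a ≠ b then ρ a * ρ b * L a b else 0) := by
  have hswap : ∑ a, ∑ b, (if a ≠ b then ρ a * ρ b * L b a else 0)
      = ∑ a, ∑ b, (if a ≠ b then ρ a * ρ b * L a b else 0) := by
    rw [Finset.sum_comm]
    simp only [ne_comm, mul_comm (ρ _) (ρ _)]
  have hsplit : ∀ a b, (if a ≠ b then ρ a * ρ b * ((1 / 2) * L a b + (1 / 2) * L b a) else 0)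
      = (1 / 2) * (if a ≠ b then ρ a * ρ b * L a b else 0)
        + (1 / 2) * (if a ≠ b then ρ a * ρ b * L b a else 0) := fun a b => by
    split_ifs <;> ring
  simp only [hsplit, Finset.sum_add_distrib, ← Finset.mul_sum, hswap]
  ring

lemma sum_offDiag_symmetrize_le {C : Type*} [Fintype C] [DecidableEq C] {ρ : C → ℝ}
    (hρ : ∀ c, 0 ≤ ρ c) {L T : C → C → ℝ} (h : ∀ a b, L a b ≤ T a b) :
    ∑ a, ∑ b, (if a ≠ b then ρ a * ρ b * ((1 / 2) * L a b + (1 / 2) * L b a) else 0)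
      ≤ ∑ a, ∑ b, (if a ≠ b then ρ a * ρ b * T a b else 0) := by
  rw [sum_offDiag_symmetrize]
  gcongr with a _ b _
  split_ifs
  · exact mul_le_mul_of_nonneg_left (h a b) (mul_nonneg (hρ a) (hρ b))
  · rfl

theorem sup_loss_le_neq_loss_add_deviation_general
    {X : Type*} [MeasurableSpace X] {C : Type*} [Fintype C] [DecidableEq C] {d : ℕ}
    (ρ : C → ℝ) (hρ0 : ∀ c, 0 ≤ ρ c)
    (hτlt : ∑ c, (ρ c) ^ 2 < 1)
    (D : C → Measure X) (hD : ∀ c, IsProbabilityMeasure (D c))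
    (f : X → EuclideanSpace ℝ (Fin d)) (hfm : Measurable f)
    (R : ℝ) (hfb : ∀ x, ‖f x‖ ≤ R)
    (μ : C → EuclideanSpace ℝ (Fin d)) (hμ : ∀ c, μ c = ∫ x, f x ∂(D c))
    (S : C → Matrix (Fin d) (Fin d) ℝ) :
    (1 / (1 - ∑ c, (ρ c) ^ 2)) *
        ∑ cp, ∑ cm, (if cp ≠ cm then ρ cp * ρ cm *
          ((1 / 2) * ∫ x, max (1 - ⟪f x, μ cp - μ cm⟫) 0 ∂(D cp) +
           (1 / 2) * ∫ x, max (1 - ⟪f x, μ cm - μ cp⟫) 0 ∂(D cm)) else 0)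
    ≤ (1 / (1 - ∑ c, (ρ c) ^ 2)) *
        ∑ cp, ∑ cm, (if cp ≠ cm then ρ cp * ρ cm *
          ∫ x, ∫ xp, ∫ xm, max (1 - ⟪f x, f xp - f xm⟫) 0 ∂(D cm) ∂(D cp) ∂(D cp) else 0)
      + ((∑ c, (ρ c) ^ 2) / (1 - ∑ c, (ρ c) ^ 2)) * Real.sqrt 2 *
        ∑ c, ((ρ c) ^ 2 / ∑ c', (ρ c') ^ 2) *
          (Real.sqrt ‖Matrix.toEuclideanCLM (𝕜 := ℝ) (S c)‖ * ∫ x, ‖f x‖ ∂(D c)) := by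
  have hτ : 0 ≤ ∑ c, (ρ c) ^ 2 := Finset.sum_nonneg fun c _ => sq_nonneg _
  have h1τ : 0 ≤ 1 - ∑ c, (ρ c) ^ 2 := by linarith
  have hjensen : ∀ a b, ∫ x, hingeLoss ⟪f x, μ a - μ b⟫ ∂(D a)
      ≤ ∫ x, ∫ xp, ∫ xm, hingeLoss ⟪f x, f xp - f xm⟫ ∂(D b) ∂(D a) ∂(D a) := fun a b => by
    have := hD a; have := hD b
    rw [hμ a, hμ b]
    exact integral_hingeLoss_inner_integral_sub_le hfm.stronglyMeasurable hfb
  refine le_add_of_le_of_nonneg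
    (mul_le_mul_of_nonneg_left (sum_offDiag_symmetrize_le hρ0 hjensen) (by positivity)) ?_
  have := div_nonneg hτ h1τ
  positivity

/-- Theorem 4.5 (population version, hinge loss): every bounded representation `f`
satisfies `L_sup^μ(f) ≤ L_un^≠(f) + (τ/(1−τ)) √2 s(f)`, where
`s(f) = E_{c∼ν}[√‖Σ(f,c)‖₂ E_{x∼D_c}‖f(x)‖]` and `ν(c) ∝ ρ(c)²`. -/
theorem sup_loss_le_neq_loss_add_deviation
    {X : Type*} [MeasurableSpace X] {C : Type*} [Fintype C] [DecidableEq C] {d : ℕ}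
    (ρ : C → ℝ) (hρ0 : ∀ c, 0 ≤ ρ c) (hρ1 : ∑ c, ρ c = 1)
    (hτpos : 0 < ∑ c, (ρ c) ^ 2) (hτlt : ∑ c, (ρ c) ^ 2 < 1)
    (D : C → Measure X) (hD : ∀ c, IsProbabilityMeasure (D c))
    (f : X → EuclideanSpace ℝ (Fin d)) (hfm : Measurable f)
    (R : ℝ) (hfb : ∀ x, ‖f x‖ ≤ R)
    (μ : C → EuclideanSpace ℝ (Fin d)) (hμ : ∀ c, μ c = ∫ x, f x ∂(D c))
    (S : C → Matrix (Fin d) (Fin d) ℝ)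
    (hS : ∀ c i j, S c i j = ∫ x, (f x i - μ c i) * (f x j - μ c j) ∂(D c)) :
    (1 / (1 - ∑ c, (ρ c) ^ 2)) *
        ∑ cp, ∑ cm, (if cp ≠ cm then ρ cp * ρ cm *
          ((1 / 2) * ∫ x, max (1 - ⟪f x, μ cp - μ cm⟫) 0 ∂(D cp) +
           (1 / 2) * ∫ x, max (1 - ⟪f x, μ cm - μ cp⟫) 0 ∂(D cm)) else 0)
    ≤ (1 / (1 - ∑ c, (ρ c) ^ 2)) *
        ∑ cp, ∑ cm, (if cp ≠ cm then ρ cp * ρ cm *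
          ∫ x, ∫ xp, ∫ xm, max (1 - ⟪f x, f xp - f xm⟫) 0 ∂(D cm) ∂(D cp) ∂(D cp) else 0)
      + ((∑ c, (ρ c) ^ 2) / (1 - ∑ c, (ρ c) ^ 2)) * Real.sqrt 2 *
        ∑ c, ((ρ c) ^ 2 / ∑ c', (ρ c') ^ 2) *
          (Real.sqrt ‖Matrix.toEuclideanCLM (𝕜 := ℝ) (S c)‖ * ∫ x, ‖f x‖ ∂(D c)) :=
  sup_loss_le_neq_loss_add_deviation_general ρ hρ0 hτlt D hD f hfm R hfb μ hμ S
end
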